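/- arXiv:2105.15156 — 6 statements merged into one kernel-verified Lean document; each statement's English description precedes it below -/
import Mathlib

section
/- Let X_1, ..., X_{2n} be bounded random variables with |X_k| ≤ c_k, such that the conditional expectation of each X_k given all the others is at most α_k. Then for any t > 0, P(Σ X_k ≥ Σ α_k + t) ≤ exp(−t² / (2 Σ c_k²)) (an Azuma–Hoeffding type bound applied via the Doob martingale of partial conditional expectations). -/
/-! Write `ℱ i = σ(X j : j < i)`. As `ℱ k ⊆ σ(X j : j ≠ k)`, the tower property gives
`E[X k | ℱ k] ≤ α k`. Bounding `exp (l * x)` on `[-c, c]` by its chord and applying Hoeffding's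
lemma to the resulting two-point law yields `E[exp (l * X k) | ℱ k] ≤ exp (l * α k + l² c_k² / 2)`.
Peeling off the variables one at a time bounds the moment generating function of `∑ X k` by
`exp (l ∑ α k + l² ∑ c_k² / 2)`, and Chernoff's bound with `l = t / ∑ c_k²` concludes. -/

open MeasureTheory Real Finset ProbabilityTheory

-- Hoeffding's lemma for the law on `{1, -1}` with mean `s`.
theorem cosh_add_mul_sinh_le_exp {s : ℝ} (hs : |s| ≤ 1) (u : ℝ) :
    cosh u + s * sinh u ≤ exp (s * u + u ^ 2 / 2) := by
  obtain ⟨hs₁, hs₂⟩ := abs_le.mp hs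
  set p : unitInterval := ⟨(1 + s) / 2, by constructor <;> linarith⟩
  have hsupp : ∀ᵐ x ∂Ber((1 : ℝ), -1, p), x ∈ Set.Icc (-1 : ℝ) 1 := by
    classical
    change Ber((1 : ℝ), -1, p) (Set.Icc (-1) 1)ᶜ = 0
    rw [bernoulliMeasure_apply_of_notMem_of_notMem _ measurableSet_Icc.compl] <;> simp
  have hmean : ∫ x, id x ∂Ber((1 : ℝ), -1, p) = s := by
    simp only [integral_bernoulliMeasure, id, smul_eq_mul, p]
    ring
  have hmgf : mgf (fun x ↦ id x - ∫ y, id y ∂Ber((1 : ℝ), -1, p)) Ber((1 : ℝ), -1, p) u =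
      (cosh u + s * sinh u) * exp (-(s * u)) := by
    rw [hmean]
    simp only [mgf, integral_bernoulliMeasure, id, smul_eq_mul, p, cosh_eq, sinh_eq]
    rw [show u * (1 - s) = u + -(s * u) by ring, show u * (-1 - s) = -u + -(s * u) by ring,
      exp_add, exp_add]
    ring
  have h := (hasSubgaussianMGF_of_mem_Icc aemeasurable_id hsupp).mgf_le u
  rw [hmgf, exp_neg, ← div_eq_mul_inv, div_le_iff₀ (exp_pos _), ← exp_add] at h
  norm_num at h
  linarith [show exp (u ^ 2 / 2 + s * u) = exp (s * u + u ^ 2 / 2) by rw [add_comm]]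

theorem exp_mul_le_cosh_add_sinh_div_mul {l c x : ℝ} (hx : |x| ≤ c) :
    exp (l * x) ≤ cosh (l * c) + sinh (l * c) / c * x := by
  obtain ⟨hx₁, hx₂⟩ := abs_le.mp hx
  rcases (neg_le_self_iff.mp (hx₁.trans hx₂)).eq_or_lt with rfl | hc
  · simp [show x = 0 by linarith]
  have ha : 0 ≤ (c + x) / (2 * c) := div_nonneg (by linarith) (by positivity)
  have hb : 0 ≤ (c - x) / (2 * c) := div_nonneg (by linarith) (by positivity)
  have hconv := convexOn_exp.2 (Set.mem_univ (l * c)) (Set.mem_univ (-(l * c))) ha hb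
    (by field_simp; ring)
  simp only [smul_eq_mul] at hconv
  calc exp (l * x) = exp ((c + x) / (2 * c) * (l * c) + (c - x) / (2 * c) * -(l * c)) := by
        congr 1; field_simp; ring
    _ ≤ (c + x) / (2 * c) * exp (l * c) + (c - x) / (2 * c) * exp (-(l * c)) := hconv
    _ = cosh (l * c) + sinh (l * c) / c * x := by rw [cosh_eq, sinh_eq]; field_simp; ring

theorem cosh_add_sinh_div_mul_le_exp {l c x α : ℝ} (hl : 0 ≤ l) (hx : |x| ≤ c) (hxα : x ≤ α) :
    cosh (l * c) + sinh (l * c) / c * x ≤ exp (l * α + l ^ 2 * c ^ 2 / 2) := by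
  rcases (abs_nonneg x |>.trans hx).eq_or_lt with rfl | hc
  · simp [abs_nonpos_iff.mp hx] at hxα ⊢
    exact mul_nonneg hl hxα
  calc cosh (l * c) + sinh (l * c) / c * x = cosh (l * c) + x / c * sinh (l * c) := by ring
    _ ≤ exp (x / c * (l * c) + (l * c) ^ 2 / 2) := by
      refine cosh_add_mul_sinh_le_exp ?_ _
      rwa [abs_div, abs_of_pos hc, div_le_one hc]
    _ ≤ exp (l * α + l ^ 2 * c ^ 2 / 2) := by
      rw [exp_le_exp, show x / c * (l * c) = l * x by field_simp]
      linarith [mul_le_mul_of_nonneg_left hxα hl]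

section Conditional

variable {Ω : Type*} {m m₀ : MeasurableSpace Ω} {μ : Measure Ω} [IsFiniteMeasure μ]

theorem integrable_exp_mul_of_abs_le {X : Ω → ℝ} (hX : AEMeasurable X μ) {c : ℝ}
    (hbdd : ∀ᵐ ω ∂μ, |X ω| ≤ c) (t : ℝ) : Integrable (fun ω ↦ exp (t * X ω)) μ :=
  integrable_exp_mul_of_mem_Icc hX (hbdd.mono fun _ h ↦ abs_le.mp h)

theorem condExp_exp_mul_le (hm : m ≤ m₀) {Y : Ω → ℝ} (hY : AEMeasurable Y μ) {l c α : ℝ}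
    (hl : 0 ≤ l) (hbdd : ∀ᵐ ω ∂μ, |Y ω| ≤ c) (hcond : μ[Y | m] ≤ᵐ[μ] fun _ ↦ α) :
    μ[fun ω ↦ exp (l * Y ω) | m] ≤ᵐ[μ] fun _ ↦ exp (l * α + l ^ 2 * c ^ 2 / 2) := by
  set A := cosh (l * c)
  set B := sinh (l * c) / c
  have hYint : Integrable Y μ := Integrable.of_mem_Icc (-c) c hY (hbdd.mono fun _ h ↦ abs_le.mp h)
  have hchord : μ[fun ω ↦ exp (l * Y ω) | m] ≤ᵐ[μ] μ[fun ω ↦ A + B * Y ω | m] :=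
    condExp_mono (integrable_exp_mul_of_abs_le hY hbdd l)
      ((integrable_const A).add (hYint.const_mul B))
      (hbdd.mono fun ω h ↦ exp_mul_le_cosh_add_sinh_div_mul h)
  have haffine : μ[fun ω ↦ A + B * Y ω | m] =ᵐ[μ] fun ω ↦ A + B * μ[Y | m] ω := by
    simpa [add_comm] using
      ((ContinuousLinearMap.mul ℝ ℝ B).comp_condExp_add_const_comm hm hYint A).symm
  filter_upwards [hchord, haffine, ae_bdd_abs_condExp_of_ae_bdd_abs (m := m) hbdd, hcond]
    with ω h_chord h_affine h_bdd h_cond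
  rw [h_affine] at h_chord
  exact h_chord.trans (cosh_add_sinh_div_mul_le_exp hl h_bdd h_cond)

theorem condExp_le_const_of_condExp_le {m' : MeasurableSpace Ω} (hmm' : m ≤ m') (hm' : m' ≤ m₀)
    {f : Ω → ℝ} {a : ℝ} (hf : μ[f | m'] ≤ᵐ[μ] fun _ ↦ a) : μ[f | m] ≤ᵐ[μ] fun _ ↦ a := by
  calc μ[f | m] =ᵐ[μ] μ[μ[f | m'] | m] := (condExp_condExp_of_le hmm' hm').symm
    _ ≤ᵐ[μ] μ[fun _ ↦ a | m] := condExp_mono integrable_condExp (integrable_const a) hf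
    _ = fun _ ↦ a := condExp_const (hmm'.trans hm') a

theorem integral_exp_mul_add_le (hm : m ≤ m₀) {S Z : Ω → ℝ} {l K : ℝ}
    (hS : StronglyMeasurable[m] S) (hSint : Integrable (fun ω ↦ exp (l * S ω)) μ)
    (hZint : Integrable (fun ω ↦ exp (l * Z ω)) μ)
    (hSZint : Integrable (fun ω ↦ exp (l * (S ω + Z ω))) μ)
    (hK : μ[fun ω ↦ exp (l * Z ω) | m] ≤ᵐ[μ] fun _ ↦ K) :
    ∫ ω, exp (l * (S ω + Z ω)) ∂μ ≤ K * ∫ ω, exp (l * S ω) ∂μ := by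
  have hsplit : (fun ω ↦ exp (l * (S ω + Z ω))) =
      (fun ω ↦ exp (l * S ω)) * fun ω ↦ exp (l * Z ω) := by
    ext ω; simp [mul_add, exp_add]
  rw [hsplit] at hSZint ⊢
  have hpull := condExp_mul_of_stronglyMeasurable_left
    (continuous_exp.comp_stronglyMeasurable (hS.const_mul l)) hSZint hZint
  calc ∫ ω, ((fun ω ↦ exp (l * S ω)) * fun ω ↦ exp (l * Z ω)) ω ∂μ
      = ∫ ω, (μ[(fun ω ↦ exp (l * S ω)) * fun ω ↦ exp (l * Z ω) | m]) ω ∂μ :=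
        (integral_condExp hm).symm
    _ = ∫ ω, exp (l * S ω) * (μ[fun ω ↦ exp (l * Z ω) | m]) ω ∂μ := integral_congr_ae hpull
    _ ≤ ∫ ω, exp (l * S ω) * K ∂μ := by
        refine integral_mono_ae (integrable_condExp.congr hpull) (hSint.mul_const K) ?_
        filter_upwards [hK] with ω hω
        exact mul_le_mul_of_nonneg_left hω (exp_pos _).le
    _ = K * ∫ ω, exp (l * S ω) ∂μ := by rw [integral_mul_const, mul_comm]

theorem integrable_exp_mul_sum_range {Y : ℕ → Ω → ℝ} {c : ℕ → ℝ}
    (hY : ∀ i, AEMeasurable (Y i) μ) (hbdd : ∀ i, ∀ᵐ ω ∂μ, |Y i ω| ≤ c i) (l : ℝ) (N : ℕ) :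
    Integrable (fun ω ↦ exp (l * ∑ i ∈ range N, Y i ω)) μ := by
  refine integrable_exp_mul_of_abs_le (Finset.aemeasurable_fun_sum _ fun i _ ↦ hY i)
    (c := ∑ i ∈ range N, c i) ?_ l
  filter_upwards [ae_all_iff.2 hbdd] with ω hω
  exact (abs_sum_le_sum_abs _ _).trans (sum_le_sum fun i _ ↦ hω i)

end Conditional

section Filtration

variable {Ω : Type*} {m₀ : MeasurableSpace Ω} {μ : Measure Ω} {ℱ : Filtration ℕ m₀}
  {Y : ℕ → Ω → ℝ} {c α : ℕ → ℝ}

theorem stronglyMeasurable_sum_range (hY : ∀ i, StronglyMeasurable[ℱ (i + 1)] (Y i)) (N : ℕ) :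
    StronglyMeasurable[ℱ N] fun ω ↦ ∑ i ∈ range N, Y i ω :=
  Finset.stronglyMeasurable_fun_sum _ fun i hi ↦
    (hY i).mono (ℱ.mono (Nat.succ_le_of_lt (mem_range.mp hi)))

variable [IsZeroOrProbabilityMeasure μ]

theorem integral_exp_mul_sum_range_le (hY : ∀ i, StronglyMeasurable[ℱ (i + 1)] (Y i))
    (hbdd : ∀ i, ∀ᵐ ω ∂μ, |Y i ω| ≤ c i) (hcond : ∀ i, μ[Y i | ℱ i] ≤ᵐ[μ] fun _ ↦ α i)
    {l : ℝ} (hl : 0 ≤ l) (N : ℕ) :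
    ∫ ω, exp (l * ∑ i ∈ range N, Y i ω) ∂μ ≤
      exp (∑ i ∈ range N, (l * α i + l ^ 2 * c i ^ 2 / 2)) := by
  have hYm : ∀ i, AEMeasurable (Y i) μ :=
    fun i ↦ ((hY i).mono (ℱ.le (i + 1))).measurable.aemeasurable
  induction N with
  | zero => simp
  | succ N ih =>
    calc ∫ ω, exp (l * ∑ i ∈ range (N + 1), Y i ω) ∂μ
        = ∫ ω, exp (l * (∑ i ∈ range N, Y i ω + Y N ω)) ∂μ := by simp only [sum_range_succ]
      _ ≤ exp (l * α N + l ^ 2 * c N ^ 2 / 2) * ∫ ω, exp (l * ∑ i ∈ range N, Y i ω) ∂μ :=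
          integral_exp_mul_add_le (ℱ.le N) (stronglyMeasurable_sum_range hY N)
            (integrable_exp_mul_sum_range hYm hbdd l N)
            (integrable_exp_mul_of_abs_le (hYm N) (hbdd N) l)
            (by simpa only [← sum_range_succ] using integrable_exp_mul_sum_range hYm hbdd l (N + 1))
            (condExp_exp_mul_le (ℱ.le N) (hYm N) hl (hbdd N) (hcond N))
      _ ≤ exp (l * α N + l ^ 2 * c N ^ 2 / 2) *
            exp (∑ i ∈ range N, (l * α i + l ^ 2 * c i ^ 2 / 2)) := by gcongr
      _ = exp (∑ i ∈ range (N + 1), (l * α i + l ^ 2 * c i ^ 2 / 2)) := by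
        rw [sum_range_succ, ← exp_add, add_comm]

theorem measureReal_sum_range_ge_le_of_condExp_le (hY : ∀ i, StronglyMeasurable[ℱ (i + 1)] (Y i))
    (hbdd : ∀ i, ∀ᵐ ω ∂μ, |Y i ω| ≤ c i) (hcond : ∀ i, μ[Y i | ℱ i] ≤ᵐ[μ] fun _ ↦ α i)
    (N : ℕ) {t : ℝ} (ht : 0 ≤ t) :
    μ.real {ω | ∑ i ∈ range N, α i + t ≤ ∑ i ∈ range N, Y i ω} ≤
      exp (-t ^ 2 / (2 * ∑ i ∈ range N, c i ^ 2)) := by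
  set V := ∑ i ∈ range N, c i ^ 2
  rcases (show 0 ≤ V from sum_nonneg fun i _ ↦ sq_nonneg (c i)).eq_or_lt with hV | hV
  · rw [← hV, mul_zero, div_zero, exp_zero]
    exact measureReal_le_one
  have hYm : ∀ i, AEMeasurable (Y i) μ :=
    fun i ↦ ((hY i).mono (ℱ.le (i + 1))).measurable.aemeasurable
  set l := t / V
  have hl : 0 ≤ l := div_nonneg ht hV.le
  calc μ.real {ω | ∑ i ∈ range N, α i + t ≤ ∑ i ∈ range N, Y i ω}
      ≤ exp (-l * (∑ i ∈ range N, α i + t)) * mgf (fun ω ↦ ∑ i ∈ range N, Y i ω) μ l :=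
        measure_ge_le_exp_mul_mgf _ hl (integrable_exp_mul_sum_range hYm hbdd l N)
    _ ≤ exp (-l * (∑ i ∈ range N, α i + t)) *
          exp (∑ i ∈ range N, (l * α i + l ^ 2 * c i ^ 2 / 2)) := by
        gcongr
        exact integral_exp_mul_sum_range_le hY hbdd hcond hl N
    _ = exp (-t ^ 2 / (2 * V)) := by
        rw [← exp_add, sum_add_distrib, ← mul_sum, ← sum_div, ← mul_sum]
        congr 1
        simp only [l, V]
        field_simp
        ring

end Filtration

section Prefix

variable {Ω : Type*} [m₀ : MeasurableSpace Ω]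

def prefixFiltration (Y : ℕ → Ω → ℝ) (hY : ∀ i, Measurable (Y i)) : Filtration ℕ m₀ where
  seq i := ⨆ j < i, MeasurableSpace.comap (Y j) inferInstance
  mono' _ _ h := biSup_mono fun _ hj ↦ hj.trans_le h
  le' _ := iSup₂_le fun j _ ↦ (hY j).comap_le

theorem stronglyMeasurable_prefixFiltration_succ {Y : ℕ → Ω → ℝ} (hY : ∀ i, Measurable (Y i))
    (i : ℕ) : StronglyMeasurable[prefixFiltration Y hY (i + 1)] (Y i) :=
  (Measurable.of_comap_le (le_iSup₂_of_le i (Nat.lt_succ_self i) le_rfl)).stronglyMeasurable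

end Prefix

def extendByZero {β : Type*} [Zero β] {N : ℕ} (f : Fin N → β) (i : ℕ) : β :=
  if h : i < N then f ⟨i, h⟩ else 0

@[simp]
theorem extendByZero_val {β : Type*} [Zero β] {N : ℕ} (f : Fin N → β) (k : Fin N) :
    extendByZero f k = f k := by
  simp [extendByZero]

theorem measurable_extendByZero {Ω : Type*} [MeasurableSpace Ω] {N : ℕ} {X : Fin N → Ω → ℝ}
    (hX : ∀ k, Measurable (X k)) (i : ℕ) : Measurable (extendByZero X i) := by
  unfold extendByZero
  split_ifs
  exacts [hX _, measurable_const]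

theorem prefixFiltration_extendByZero_le {Ω : Type*} [MeasurableSpace Ω] {N : ℕ}
    {X : Fin N → Ω → ℝ} (hX : ∀ i, Measurable (extendByZero X i)) {i : ℕ} (hi : i < N) :
    prefixFiltration (extendByZero X) hX i ≤
      ⨆ (j : Fin N) (_ : j ≠ ⟨i, hi⟩), MeasurableSpace.comap (X j) inferInstance :=
  iSup₂_le fun j hj ↦ le_iSup₂_of_le (⟨j, hj.trans hi⟩ : Fin N) (Fin.ne_of_val_ne hj.ne)
    (by simp [extendByZero, hj.trans hi])

/-- Azuma–Hoeffding type bound. If `X 1, ..., X (2n)` are bounded random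
variables with `|X k| ≤ c k` and the conditional expectation of each `X k` given all the
others is at most `α k`, then for any `t > 0`,
`P(Σ X k ≥ Σ α k + t) ≤ exp (−t² / (2 Σ (c k)²))`. -/
theorem stmt_2 {Ω : Type*} [MeasurableSpace Ω] (μ : Measure Ω) [IsProbabilityMeasure μ]
    (n : ℕ) (X : Fin (2 * n) → Ω → ℝ) (c α : Fin (2 * n) → ℝ)
    (hmeas : ∀ k, Measurable (X k))
    (hbdd : ∀ k, ∀ᵐ ω ∂μ, |X k ω| ≤ c k)
    (hcond : ∀ k, ∀ᵐ ω ∂μ,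
      (μ[X k | ⨆ (j : Fin (2 * n)) (_ : j ≠ k),
          MeasurableSpace.comap (X j) inferInstance]) ω ≤ α k) :
    ∀ t : ℝ, 0 < t →
      (μ {ω | (∑ k, α k) + t ≤ ∑ k, X k ω}).toReal ≤
        Real.exp (-(t ^ 2) / (2 * ∑ k, (c k) ^ 2)) := by
  intro t ht
  set Y := extendByZero X
  have hYm : ∀ i, Measurable (Y i) := measurable_extendByZero hmeas
  have hYbdd : ∀ i, ∀ᵐ ω ∂μ, |Y i ω| ≤ extendByZero c i := fun i ↦ by
    unfold Y extendByZero; split_ifs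
    exacts [hbdd _, by simp]
  have hYcond : ∀ i, μ[Y i | prefixFiltration Y hYm i] ≤ᵐ[μ] fun _ ↦ extendByZero α i := by
    intro i
    unfold extendByZero
    by_cases hi : i < 2 * n
    · simpa [Y, extendByZero, hi] using
        condExp_le_const_of_condExp_le (prefixFiltration_extendByZero_le hYm hi)
          (iSup₂_le fun j _ ↦ (hmeas j).comap_le) (hcond ⟨i, hi⟩)
    · simp only [Y, extendByZero, hi, dite_false, condExp_zero]
      exact ae_of_all _ fun _ ↦ le_rfl
  simpa [Finset.sum_range, Y, measureReal_def] using
    measureReal_sum_range_ge_le_of_condExp_le (stronglyMeasurable_prefixFiltration_succ hYm)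
      hYbdd hYcond (2 * n) ht.le
end

section
/- Let W = v_0, (v_0,v_1), ..., v_{n-1}, (v_{n-1},v_0), v_0 be a cycle of length n on a weighted directed graph, with vertex weights w(v_k) and edge weights w(v_k, v_{k+1}) (indices mod n) that are random variables. Suppose there are constants 0 < β ≤ B and A > 0, α < β, and a fixed scalar Δ > 0, such that for every k: 0 < w(v_k)Δ ≤ B with E[w(v_k)Δ | all other weights] = β, and w(v_k,v_{k+1}) ∈ [−A, A] with E[w(v_k,v_{k+1}) | all other weights] ≤ α. Then the probability that Γ(W) := −Σ_{k<n} w(v_k)Δ + Σ_{k<n} w(v_k,v_{k+1}) < 0 is at least 1 − exp(−(1/2)((α−β)/(A+B))² n). -/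
/-!
Order the `2n` summands of `Γ(W)` as all vertex terms `-w(v_k)Δ ∈ [-B, 0]` followed by all edge
terms `w(v_k, v_{k+1}) ∈ [-A, A]`. The σ-algebra generated by the terms preceding a given one is
contained in the σ-algebra of all other weights, so conditionally on it the term has mean at most
`-β`, resp. `α`. Peeling off the last term with the conditional Hoeffding lemma gives
`E[exp (t Γ)] ≤ exp (n (t (α - β) + t² (B² + 4A²) / 8))`, and Chernoff's bound at
`t = (β - α) / (A + B)²` gives `P(Γ ≥ 0) ≤ exp (-(1/2) ((α - β) / (A + B))² n)`.
-/

open MeasureTheory ProbabilityTheory Real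

lemma exp_mul_le_chord {a b x : ℝ} (hab : a < b) (hax : a ≤ x) (hxb : x ≤ b) (t : ℝ) :
    exp (t * x) ≤ ((b - x) * exp (t * a) + (x - a) * exp (t * b)) / (b - a) := by
  have hba : 0 < b - a := sub_pos.2 hab
  have h := convexOn_exp.2 (Set.mem_univ (t * a)) (Set.mem_univ (t * b))
    (div_nonneg (sub_nonneg.2 hxb) hba.le) (div_nonneg (sub_nonneg.2 hax) hba.le)
    (by field_simp; ring)
  have harg : (b - x) / (b - a) * (t * a) + (x - a) / (b - a) * (t * b) = t * x := by
    field_simp; ring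
  simp only [smul_eq_mul, harg] at h
  calc exp (t * x) ≤ (b - x) / (b - a) * exp (t * a) + (x - a) / (b - a) * exp (t * b) := h
    _ = _ := by ring

lemma integral_ofReal_smul_dirac_add {p : ℝ} (hp₀ : 0 ≤ p) (hp₁ : p ≤ 1) (a b : ℝ) (f : ℝ → ℝ) :
    ∫ x, f x ∂(ENNReal.ofReal (1 - p) • Measure.dirac a + ENNReal.ofReal p • Measure.dirac b) =
      (1 - p) * f a + p * f b := by
  rw [integral_add_measure, integral_smul_measure, integral_smul_measure, integral_dirac,
    integral_dirac, ENNReal.toReal_ofReal hp₀, ENNReal.toReal_ofReal (by linarith), smul_eq_mul,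
    smul_eq_mul]
  all_goals exact (integrable_dirac (by simp)).smul_measure (by simp)

lemma chord_le_exp_mul_add_sq_div_eight {a b m : ℝ} (hab : a < b) (ham : a ≤ m) (hmb : m ≤ b)
    (t : ℝ) :
    ((b - m) * exp (t * a) + (m - a) * exp (t * b)) / (b - a) ≤
      exp (t * m + t ^ 2 * (b - a) ^ 2 / 8) := by
  have hba : b - a ≠ 0 := sub_ne_zero.2 hab.ne'
  set p := (m - a) / (b - a) with hp
  have hp₀ : 0 ≤ p := div_nonneg (by linarith) (by linarith)
  have hp₁ : p ≤ 1 := (div_le_one (by linarith)).2 (by linarith)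
  set ν := ENNReal.ofReal (1 - p) • Measure.dirac a + ENNReal.ofReal p • Measure.dirac b
  have : IsProbabilityMeasure ν := ⟨by
    simp [ν, ← ENNReal.ofReal_add (by linarith : (0:ℝ) ≤ 1 - p) hp₀]⟩
  have hν : ∀ f : ℝ → ℝ, ∫ x, f x ∂ν = (1 - p) * f a + p * f b :=
    integral_ofReal_smul_dirac_add hp₀ hp₁ a b
  have hsupp : ∀ᵐ x ∂ν, x - m ∈ Set.Icc (a - m) (b - m) := by
    refine ae_add_measure_iff.2 ⟨Measure.ae_smul_measure ?_ _, Measure.ae_smul_measure ?_ _⟩ <;>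
      refine (ae_dirac_iff (measurableSet_Icc.preimage (measurable_id'.sub_const m))).2 ⟨?_, ?_⟩ <;>
      linarith
  have hmean : ∫ x, (x - m) ∂ν = 0 := by
    rw [hν, hp]; field_simp; ring
  -- Hoeffding's lemma for the two-point law on `{a, b}` with mean `m`
  have hmgf := (hasSubgaussianMGF_of_mem_Icc_of_integral_eq_zero
    (measurable_id'.sub_const m).aemeasurable hsupp hmean).mgf_le t
  rw [mgf, hν] at hmgf
  calc ((b - m) * exp (t * a) + (m - a) * exp (t * b)) / (b - a)
      = exp (t * m) * ((1 - p) * exp (t * (a - m)) + p * exp (t * (b - m))) := by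
        rw [hp, mul_sub, mul_sub, exp_sub, exp_sub]; field_simp; ring
    _ ≤ exp (t * m) * exp (t ^ 2 * (b - a) ^ 2 / 8) := by
        gcongr
        refine hmgf.trans_eq (congrArg exp ?_)
        rw [sub_sub_sub_cancel_right]
        push_cast [coe_nnnorm, Real.norm_eq_abs, div_pow, sq_abs]
        ring
    _ = exp (t * m + t ^ 2 * (b - a) ^ 2 / 8) := (exp_add _ _).symm

section FiniteMeasure

variable {Ω : Type*} {m0 : MeasurableSpace Ω} {μ : Measure Ω} [IsFiniteMeasure μ]

lemma ae_condExp_mem_Icc {F : MeasurableSpace Ω} (hF : F ≤ m0) {X : Ω → ℝ} {a b : ℝ}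
    (hX : AEMeasurable X μ) (hXab : ∀ᵐ ω ∂μ, X ω ∈ Set.Icc a b) :
    ∀ᵐ ω ∂μ, μ[X|F] ω ∈ Set.Icc a b := by
  have hXint := Integrable.of_mem_Icc a b hX hXab
  have ha := condExp_mono (m := F) (integrable_const a) hXint (hXab.mono fun _ h => h.1)
  have hb := condExp_mono (m := F) hXint (integrable_const b) (hXab.mono fun _ h => h.2)
  rw [condExp_const hF] at ha hb
  filter_upwards [ha, hb] with ω h₁ h₂ using ⟨h₁, h₂⟩

lemma ae_condExp_exp_mul_le {F : MeasurableSpace Ω} (hF : F ≤ m0) {X : Ω → ℝ} {a b γ t : ℝ}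
    (hab : a < b) (hX : AEMeasurable X μ) (hXab : ∀ᵐ ω ∂μ, X ω ∈ Set.Icc a b)
    (hXγ : ∀ᵐ ω ∂μ, μ[X|F] ω ≤ γ) (ht : 0 ≤ t) :
    ∀ᵐ ω ∂μ, μ[fun ω => exp (t * X ω)|F] ω ≤ exp (t * γ + t ^ 2 * (b - a) ^ 2 / 8) := by
  have hba : b - a ≠ 0 := sub_ne_zero.2 hab.ne'
  set c₁ := (b * exp (t * a) - a * exp (t * b)) / (b - a)
  set c₂ := (exp (t * b) - exp (t * a)) / (b - a)
  have hchord : ∀ x, c₁ + c₂ * x = ((b - x) * exp (t * a) + (x - a) * exp (t * b)) / (b - a) := by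
    intro x; simp only [c₁, c₂]; field_simp; ring
  have hXint := Integrable.of_mem_Icc a b hX hXab
  -- the chord of `exp (t * ·)` over `[a, b]` is affine, so it commutes with `μ[·|F]`
  have hle : μ[fun ω => exp (t * X ω)|F] ≤ᵐ[μ] μ[fun ω => c₁ + c₂ * X ω|F] :=
    condExp_mono (integrable_exp_mul_of_mem_Icc hX hXab)
      ((integrable_const c₁).add (hXint.const_mul c₂))
      (hXab.mono fun ω h => (exp_mul_le_chord hab h.1 h.2 t).trans_eq (hchord (X ω)).symm)
  have haffine : μ[fun ω => c₁ + c₂ * X ω|F] =ᵐ[μ] fun ω => c₁ + c₂ * μ[X|F] ω := by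
    have hadd : μ[fun ω => c₁ + c₂ * X ω|F] =ᵐ[μ] μ[fun _ => c₁|F] + μ[c₂ • X|F] :=
      condExp_add (integrable_const c₁) (hXint.smul c₂) F
    filter_upwards [hadd, condExp_smul (m := F) c₂ X] with ω h₁ h₂
    rw [h₁, Pi.add_apply, h₂, condExp_const hF, Pi.smul_apply, smul_eq_mul]
  filter_upwards [hle, haffine, ae_condExp_mem_Icc hF hX hXab, hXγ] with ω h₁ h₂ h₃ h₄
  calc μ[fun ω => exp (t * X ω)|F] ω ≤ c₁ + c₂ * μ[X|F] ω := h₂ ▸ h₁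
    _ ≤ exp (t * μ[X|F] ω + t ^ 2 * (b - a) ^ 2 / 8) :=
      (hchord _).trans_le (chord_le_exp_mul_add_sq_div_eight hab h₃.1 h₃.2 t)
    _ ≤ exp (t * γ + t ^ 2 * (b - a) ^ 2 / 8) := by gcongr

lemma integral_mul_le_of_ae_condExp_le {F : MeasurableSpace Ω} (hF : F ≤ m0) {W g : Ω → ℝ}
    {K : ℝ} (hWF : StronglyMeasurable[F] W) (hW : 0 ≤ W) (hWint : Integrable W μ)
    (hg : Integrable g μ) (hWg : Integrable (W * g) μ) (hgK : ∀ᵐ ω ∂μ, μ[g|F] ω ≤ K) :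
    ∫ ω, W ω * g ω ∂μ ≤ K * ∫ ω, W ω ∂μ := by
  have hpull := condExp_mul_of_stronglyMeasurable_left hWF hWg hg
  calc ∫ ω, W ω * g ω ∂μ = ∫ ω, μ[W * g|F] ω ∂μ := (integral_condExp hF).symm
    _ = ∫ ω, W ω * μ[g|F] ω ∂μ := integral_congr_ae hpull
    _ ≤ ∫ ω, W ω * K ∂μ := by
        refine integral_mono_ae (integrable_condExp.congr hpull) (hWint.mul_const K) ?_
        filter_upwards [hgK] with ω h using mul_le_mul_of_nonneg_left h (hW ω)
    _ = K * ∫ ω, W ω ∂μ := by rw [integral_mul_const, mul_comm]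

lemma integrable_exp_mul_sum {ι : Type*} {X : ι → Ω → ℝ} {a b : ι → ℝ}
    (hX : ∀ i, AEMeasurable (X i) μ) (hXab : ∀ i, ∀ᵐ ω ∂μ, X i ω ∈ Set.Icc (a i) (b i))
    (s : Finset ι) (t : ℝ) : Integrable (fun ω => exp (t * ∑ i ∈ s, X i ω)) μ := by
  refine integrable_exp_mul_of_mem_Icc (a := ∑ i ∈ s, a i) (b := ∑ i ∈ s, b i)
    (Finset.aemeasurable_fun_sum s fun i _ => hX i) ?_
  filter_upwards [(Filter.eventually_all_finset s).2 fun i _ => hXab i] with ω h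
  exact ⟨Finset.sum_le_sum fun i hi => (h i hi).1, Finset.sum_le_sum fun i hi => (h i hi).2⟩

end FiniteMeasure

section ProbabilityMeasure

variable {Ω : Type*} {m0 : MeasurableSpace Ω} {μ : Measure Ω} [IsProbabilityMeasure μ]

/-- `ℱ i` need not be a filtration: it only has to make the earlier `X j` measurable. -/
lemma integral_exp_mul_sum_le {ι : Type*} [LinearOrder ι] {X : ι → Ω → ℝ}
    {ℱ : ι → MeasurableSpace Ω} (hℱ : ∀ i, ℱ i ≤ m0) (hXℱ : ∀ i j, j < i → Measurable[ℱ i] (X j))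
    (hX : ∀ i, AEMeasurable (X i) μ) {a b γ : ι → ℝ} (hab : ∀ i, a i < b i)
    (hXab : ∀ i, ∀ᵐ ω ∂μ, X i ω ∈ Set.Icc (a i) (b i))
    (hXγ : ∀ i, ∀ᵐ ω ∂μ, μ[X i|ℱ i] ω ≤ γ i) {t : ℝ} (ht : 0 ≤ t) (s : Finset ι) :
    ∫ ω, exp (t * ∑ i ∈ s, X i ω) ∂μ ≤
      exp (∑ i ∈ s, (t * γ i + t ^ 2 * (b i - a i) ^ 2 / 8)) := by
  induction s using Finset.induction_on_max with
  | empty => simp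
  | insert k s hlt ih =>
    have hk : k ∉ s := fun h => lt_irrefl k (hlt k h)
    have hWℱ : Measurable[ℱ k] fun ω => exp (t * ∑ i ∈ s, X i ω) :=
      ((Finset.measurable_sum s fun i hi => hXℱ k i (hlt i hi)).const_mul t).exp
    have hsplit : ∀ ω, exp (t * ∑ i ∈ insert k s, X i ω) =
        exp (t * ∑ i ∈ s, X i ω) * exp (t * X k ω) := fun ω => by
      rw [Finset.sum_insert hk, mul_add, exp_add, mul_comm]
    calc ∫ ω, exp (t * ∑ i ∈ insert k s, X i ω) ∂μ
        = ∫ ω, exp (t * ∑ i ∈ s, X i ω) * exp (t * X k ω) ∂μ := by simp_rw [hsplit]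
      _ ≤ exp (t * γ k + t ^ 2 * (b k - a k) ^ 2 / 8) * ∫ ω, exp (t * ∑ i ∈ s, X i ω) ∂μ :=
        integral_mul_le_of_ae_condExp_le (hℱ k) hWℱ.stronglyMeasurable (fun _ => (exp_pos _).le)
          (integrable_exp_mul_sum hX hXab s t) (integrable_exp_mul_of_mem_Icc (hX k) (hXab k))
          ((integrable_exp_mul_sum hX hXab (insert k s) t).congr (ae_of_all _ hsplit))
          (ae_condExp_exp_mul_le (hℱ k) (hab k) (hX k) (hXab k) (hXγ k) ht)
      _ ≤ exp (t * γ k + t ^ 2 * (b k - a k) ^ 2 / 8) *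
            exp (∑ i ∈ s, (t * γ i + t ^ 2 * (b i - a i) ^ 2 / 8)) := by gcongr
      _ = exp (∑ i ∈ insert k s, (t * γ i + t ^ 2 * (b i - a i) ^ 2 / 8)) := by
        rw [Finset.sum_insert hk, ← exp_add]

lemma measureReal_sum_ge_le {ι : Type*} [LinearOrder ι] {X : ι → Ω → ℝ}
    {ℱ : ι → MeasurableSpace Ω} (hℱ : ∀ i, ℱ i ≤ m0) (hXℱ : ∀ i j, j < i → Measurable[ℱ i] (X j))
    (hX : ∀ i, AEMeasurable (X i) μ) {a b γ : ι → ℝ} (hab : ∀ i, a i < b i)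
    (hXab : ∀ i, ∀ᵐ ω ∂μ, X i ω ∈ Set.Icc (a i) (b i))
    (hXγ : ∀ i, ∀ᵐ ω ∂μ, μ[X i|ℱ i] ω ≤ γ i) {t : ℝ} (ht : 0 ≤ t) (s : Finset ι) (ε : ℝ) :
    μ.real {ω | ε ≤ ∑ i ∈ s, X i ω} ≤
      exp (-t * ε + ∑ i ∈ s, (t * γ i + t ^ 2 * (b i - a i) ^ 2 / 8)) := by
  rw [exp_add]
  refine (measure_ge_le_exp_mul_mgf ε ht (integrable_exp_mul_sum hX hXab s t)).trans ?_
  gcongr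
  exact integral_exp_mul_sum_le hℱ hXℱ hX hab hXab hXγ ht s

lemma measureReal_sum_add_sum_ge_le {κ : Type*} [Fintype κ] [LinearOrder κ] {V E : κ → Ω → ℝ}
    {ℱV ℱE : κ → MeasurableSpace Ω} (hℱV : ∀ k, ℱV k ≤ m0) (hℱE : ∀ k, ℱE k ≤ m0)
    (hVℱV : ∀ k j, j < k → Measurable[ℱV k] (V j)) (hVℱE : ∀ k j, Measurable[ℱE k] (V j))
    (hEℱE : ∀ k j, j < k → Measurable[ℱE k] (E j))
    (hV : ∀ k, AEMeasurable (V k) μ) (hE : ∀ k, AEMeasurable (E k) μ)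
    {aV bV γV aE bE γE t : ℝ} (haV : aV < bV) (haE : aE < bE)
    (hVab : ∀ k, ∀ᵐ ω ∂μ, V k ω ∈ Set.Icc aV bV) (hEab : ∀ k, ∀ᵐ ω ∂μ, E k ω ∈ Set.Icc aE bE)
    (hVγ : ∀ k, ∀ᵐ ω ∂μ, μ[V k|ℱV k] ω ≤ γV) (hEγ : ∀ k, ∀ᵐ ω ∂μ, μ[E k|ℱE k] ω ≤ γE)
    (ht : 0 ≤ t) (ε : ℝ) :
    μ.real {ω | ε ≤ ∑ k, V k ω + ∑ k, E k ω} ≤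
      exp (-t * ε + Fintype.card κ *
        (t * γV + t ^ 2 * (bV - aV) ^ 2 / 8 + (t * γE + t ^ 2 * (bE - aE) ^ 2 / 8))) := by
  let X : κ ⊕ₗ κ → Ω → ℝ := fun i => Sum.elim V E (ofLex i)
  have hsum : ∀ ω, ∑ i, X i ω = ∑ k, V k ω + ∑ k, E k ω := fun ω =>
    (Equiv.sum_comp ofLex (fun x => Sum.elim V E x ω)).trans (Fintype.sum_sum_type _)
  have htail := measureReal_sum_ge_le (X := X) (ℱ := fun i => Sum.elim ℱV ℱE (ofLex i))
    (a := fun i => Sum.elim (fun _ => aV) (fun _ => aE) (ofLex i))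
    (b := fun i => Sum.elim (fun _ => bV) (fun _ => bE) (ofLex i))
    (γ := fun i => Sum.elim (fun _ => γV) (fun _ => γE) (ofLex i))
    (by rintro (k | k); exacts [hℱV k, hℱE k])
    (by
      rintro (k | k) (j | j) hjk
      · exact hVℱV k j (Sum.Lex.inl_lt_inl_iff.1 hjk)
      · exact absurd hjk Sum.Lex.not_inr_lt_inl
      · exact hVℱE k j
      · exact hEℱE k j (Sum.Lex.inr_lt_inr_iff.1 hjk))
    (by rintro (k | k); exacts [hV k, hE k]) (by rintro (k | k); exacts [haV, haE])
    (by rintro (k | k); exacts [hVab k, hEab k]) (by rintro (k | k); exacts [hVγ k, hEγ k])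
    ht Finset.univ ε
  simp only [hsum] at htail
  refine htail.trans_eq ?_
  simp [← Equiv.sum_comp toLex, Fintype.sum_sum_type]
  ring

end ProbabilityMeasure

lemma measurable_iSup_comap {ι Ω β : Type*} [MeasurableSpace β] (f : ι → Ω → β) (j : ι) :
    Measurable[⨆ i, MeasurableSpace.comap (f i) inferInstance] (f j) :=
  Measurable.of_comap_le (le_iSup (fun i => MeasurableSpace.comap (f i) inferInstance) j)

lemma measurable_iSup_ne_comap {ι Ω β : Type*} [MeasurableSpace β] (f : ι → Ω → β) {j k : ι}
    (hjk : j ≠ k) :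
    Measurable[⨆ (i) (_ : i ≠ k), MeasurableSpace.comap (f i) inferInstance] (f j) :=
  Measurable.of_comap_le
    (le_iSup₂ (f := fun i (_ : i ≠ k) => MeasurableSpace.comap (f i) inferInstance) j hjk)

lemma hoeffding_exponent_le {A B α β : ℝ} (hA : 0 ≤ A) (hB : 0 ≤ B) (hAB : 0 < A + B) :
    (β - α) / (A + B) ^ 2 * (α - β) + ((β - α) / (A + B) ^ 2) ^ 2 * (B ^ 2 + (2 * A) ^ 2) / 8 ≤
      -(1 / 2) * ((α - β) / (A + B)) ^ 2 := by
  have hrange : B ^ 2 + (2 * A) ^ 2 ≤ 4 * (A + B) ^ 2 := by nlinarith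
  calc (β - α) / (A + B) ^ 2 * (α - β) + ((β - α) / (A + B) ^ 2) ^ 2 * (B ^ 2 + (2 * A) ^ 2) / 8
      ≤ (β - α) / (A + B) ^ 2 * (α - β) + ((β - α) / (A + B) ^ 2) ^ 2 * (4 * (A + B) ^ 2) / 8 := by
        gcongr
    _ = -(1 / 2) * ((α - β) / (A + B)) ^ 2 := by field_simp; ring

theorem stmt_3_general {Ω : Type*} [MeasurableSpace Ω] (μ : Measure Ω) [IsProbabilityMeasure μ]
    (n : ℕ) (wV wE : Fin n → Ω → ℝ)
    (hVmeas : ∀ k, Measurable (wV k)) (hEmeas : ∀ k, Measurable (wE k))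
    (Δ A B α β : ℝ) (hβ : 0 < β) (hβB : β ≤ B) (hA : 0 < A) (hαβ : α < β)
    (hVbdd : ∀ k, ∀ᵐ ω ∂μ, 0 < wV k ω * Δ ∧ wV k ω * Δ ≤ B)
    (hVcond : ∀ k,
      μ[fun ω => wV k ω * Δ |
        (⨆ (j : Fin n) (_ : j ≠ k), MeasurableSpace.comap (wV j) inferInstance) ⊔
        (⨆ j : Fin n, MeasurableSpace.comap (wE j) inferInstance)]
        =ᵐ[μ] fun _ => β)
    (hEbdd : ∀ k, ∀ᵐ ω ∂μ, wE k ω ∈ Set.Icc (-A) A)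
    (hEcond : ∀ k, ∀ᵐ ω ∂μ,
      (μ[wE k |
        (⨆ j : Fin n, MeasurableSpace.comap (wV j) inferInstance) ⊔
        (⨆ (j : Fin n) (_ : j ≠ k), MeasurableSpace.comap (wE j) inferInstance)]) ω ≤ α) :
    1 - Real.exp (-(1 / 2) * ((α - β) / (A + B)) ^ 2 * n) ≤
      (μ {ω | (∑ k, -(wV k ω * Δ)) + ∑ k, wE k ω < 0}).toReal := by
  have hB : 0 ≤ B := hβ.le.trans hβB
  have hVle := iSup_le fun j => (hVmeas j).comap_le
  have hEle := iSup_le fun j => (hEmeas j).comap_le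
  have htail := measureReal_sum_add_sum_ge_le (μ := μ) (V := fun k ω => -(wV k ω * Δ)) (E := wE)
    (fun k => sup_le (iSup₂_le fun j _ => (hVmeas j).comap_le) hEle)
    (fun k => sup_le hVle (iSup₂_le fun j _ => (hEmeas j).comap_le))
    (fun k j hjk =>
      (((measurable_iSup_ne_comap wV hjk.ne).mono le_sup_left le_rfl).mul_const Δ).neg)
    (fun k j => (((measurable_iSup_comap wV j).mono le_sup_left le_rfl).mul_const Δ).neg)
    (fun k j hjk => (measurable_iSup_ne_comap wE hjk.ne).mono le_sup_right le_rfl)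
    (fun k => ((hVmeas k).mul_const Δ).neg.aemeasurable) (fun k => (hEmeas k).aemeasurable)
    (neg_lt_zero.2 (hβ.trans_le hβB)) (neg_lt_self hA)
    (fun k => (hVbdd k).mono fun ω h => ⟨neg_le_neg h.2, (neg_neg_of_pos h.1).le⟩) hEbdd
    (fun k => by
      filter_upwards [condExp_neg (μ := μ) (fun ω => wV k ω * Δ) _, hVcond k] with ω h₁ h₂
      exact (h₁.trans (congrArg Neg.neg h₂)).le)
    hEcond (div_nonneg (sub_nonneg.2 hαβ.le) (sq_nonneg (A + B))) 0
  have hexponent := hoeffding_exponent_le (α := α) (β := β) hA.le hB (by linarith)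
  have hset : {ω | (∑ k, -(wV k ω * Δ)) + ∑ k, wE k ω < 0} =
      {ω | 0 ≤ (∑ k, -(wV k ω * Δ)) + ∑ k, wE k ω}ᶜ := by
    ext ω; simp [not_le]
  rw [← measureReal_def, hset, probReal_compl_eq_one_sub (measurableSet_le measurable_const
    (by fun_prop))]
  rw [Fintype.card_fin] at htail
  refine sub_le_sub_left (htail.trans (exp_le_exp.2 ?_)) 1
  linear_combination (n : ℝ) * hexponent

/-- For a cycle of length `n` with random vertex weights `wV k` and edge
weights `wE k` such that `0 < wV k * Δ ≤ B` with conditional mean (given all other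
weights) equal to `β`, and `wE k ∈ [−A, A]` with conditional mean at most `α < β`,
the probability that `Γ(W) = −Σ wV k * Δ + Σ wE k < 0` is at least
`1 − exp(−(1/2)((α−β)/(A+B))² n)`. -/
theorem stmt_3 {Ω : Type*} [MeasurableSpace Ω] (μ : Measure Ω) [IsProbabilityMeasure μ]
    (n : ℕ) (hn : 0 < n) (wV wE : Fin n → Ω → ℝ)
    (hVmeas : ∀ k, Measurable (wV k)) (hEmeas : ∀ k, Measurable (wE k))
    (Δ A B α β : ℝ) (hΔ : 0 < Δ) (hβ : 0 < β) (hβB : β ≤ B) (hA : 0 < A) (hαβ : α < β)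
    (hVbdd : ∀ k, ∀ᵐ ω ∂μ, 0 < wV k ω * Δ ∧ wV k ω * Δ ≤ B)
    (hVcond : ∀ k,
      μ[fun ω => wV k ω * Δ |
        (⨆ (j : Fin n) (_ : j ≠ k), MeasurableSpace.comap (wV j) inferInstance) ⊔
        (⨆ j : Fin n, MeasurableSpace.comap (wE j) inferInstance)]
        =ᵐ[μ] fun _ => β)
    (hEbdd : ∀ k, ∀ᵐ ω ∂μ, wE k ω ∈ Set.Icc (-A) A)
    (hEcond : ∀ k, ∀ᵐ ω ∂μ,
      (μ[wE k |
        (⨆ j : Fin n, MeasurableSpace.comap (wV j) inferInstance) ⊔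
        (⨆ (j : Fin n) (_ : j ≠ k), MeasurableSpace.comap (wE j) inferInstance)]) ω ≤ α) :
    1 - Real.exp (-(1 / 2) * ((α - β) / (A + B)) ^ 2 * n) ≤
      (μ {ω | (∑ k, -(wV k ω * Δ)) + ∑ k, wE k ω < 0}).toReal :=
  stmt_3_general μ n wV wE hVmeas hEmeas Δ A B α β hβ hβB hA hαβ hVbdd hVcond hEbdd hEcond
end

section
/- With the setup of the previous statement (Lyapunov functions V_i sandwiched by class-K∞ functions, periodic switching from a cycle W with per-period contraction factor ρ := exp(Γ(W)) < 1, zero inputs and outputs), the switched system is globally asymptotically stable: V_{σ(0)}(x(mnΔ)) ≤ ρ^m V_{σ(0)}(x(0)) for every m ∈ ℕ, and hence ‖x(t)‖ → 0 as t → ∞ for every initial condition, with the bound ‖x(t)‖ ≤ α̲^{-1}(C ρ^{⌊t/(nΔ)⌋} ᾱ(‖x(0)‖)) for a constant C ≥ 1 depending only on the λ's, μ's, n, and Δ. -/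
/-- With per-period contraction factor `ρ = exp (Γ(W)) < 1`, zero inputs
and outputs, the switched system is GAS: `V (σ 0) (x (m n Δ)) ≤ ρ^m V (σ 0) (x 0)` for
all `m`, `‖x t‖ → 0` for every initial condition, and
`‖x t‖ ≤ a⁻¹ (C ρ^⌊t/(nΔ)⌋ b ‖x 0‖)` for a constant `C ≥ 1` depending only on the
`λ`'s, `μ`'s, `n` and `Δ`. -/
theorem stmt_7 {E P : Type*} [NormedAddCommGroup E]
    (n Δ : ℕ) (hn : 0 < n) (hΔ : 0 < Δ)
    (v : ℕ → P) (hvper : ∀ k, v (k + n) = v k)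
    (V : P → E → ℝ) (f : P → E → E) (lam : P → ℝ) (muw : P → P → ℝ)
    (a b : ℝ → ℝ)
    (haK : StrictMono a ∧ Continuous a ∧ a 0 = 0 ∧ Filter.Tendsto a Filter.atTop Filter.atTop)
    (hbK : StrictMono b ∧ Continuous b ∧ b 0 = 0 ∧ Filter.Tendsto b Filter.atTop Filter.atTop)
    (hsand : ∀ (i : P) (ξ : E), a ‖ξ‖ ≤ V i ξ ∧ V i ξ ≤ b ‖ξ‖)
    (hlam : ∀ k, 0 < lam (v k))
    (hmu : ∀ k, 1 ≤ muw (v k) (v (k + 1)))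
    (hstep : ∀ (k : ℕ) (ξ : E), V (v k) (f (v k) ξ) ≤ lam (v k) * V (v k) ξ)
    (hswitch : ∀ (k : ℕ) (ξ : E), V (v (k + 1)) ξ ≤ muw (v k) (v (k + 1)) * V (v k) ξ)
    (ρ : ℝ)
    (hρ : ρ = Real.exp ((∑ k ∈ Finset.range n, Real.log (lam (v k)) * Δ) +
      ∑ k ∈ Finset.range n, Real.log (muw (v k) (v (k + 1)))))
    (hρ1 : ρ < 1) :
    (∀ x : ℕ → E, (∀ t : ℕ, x (t + 1) = f (v ((t / Δ) % n)) (x t)) →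
      (∀ m : ℕ, V (v 0) (x (m * (n * Δ))) ≤ ρ ^ m * V (v 0) (x 0)) ∧
      Filter.Tendsto (fun t => ‖x t‖) Filter.atTop (nhds 0)) ∧
    ∃ C : ℝ, 1 ≤ C ∧
      ∀ x : ℕ → E, (∀ t : ℕ, x (t + 1) = f (v ((t / Δ) % n)) (x t)) →
        ∀ t : ℕ, ‖x t‖ ≤ Function.invFun a (C * ρ ^ (t / (n * Δ)) * b ‖x 0‖) := by
  obtain ⟨haS, haC, ha0, haT⟩ := haK
  obtain ⟨hbS, hbC, hb0, hbT⟩ := hbK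
  have hVnn : ∀ (i : P) (ξ : E), 0 ≤ V i ξ := by
    intro i ξ
    have h1 := (hsand i ξ).1
    have h2 : a 0 ≤ a ‖ξ‖ := haS.monotone (norm_nonneg ξ)
    rw [ha0] at h2; linarith
  have hμnn : ∀ k, (0:ℝ) ≤ muw (v k) (v (k + 1)) := fun k => le_trans zero_le_one (hmu k)
  have hvshift : ∀ m k, v (k + m * n) = v k := by
    intro m
    induction m with
    | zero => intro k; simp
    | succ m ih =>
      intro k
      have he : k + (m + 1) * n = (k + m * n) + n := by ring
      rw [he, hvper, ih]
  have hvmod : ∀ k, v k = v (k % n) := by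
    intro k
    conv_lhs => rw [← Nat.mod_add_div' k n]
    rw [hvshift]
  set F : ℕ → ℝ := fun j => lam (v j) ^ Δ * muw (v j) (v (j + 1)) with hF
  have hFshift : ∀ m j, F (j + m * n) = F j := by
    intro m j
    simp only [hF]
    rw [hvshift m j, show j + m * n + 1 = (j + 1) + m * n by ring, hvshift]
  have hFpos : ∀ j, 0 < F j := by
    intro j
    exact mul_pos (pow_pos (hlam j) Δ) (lt_of_lt_of_le zero_lt_one (hmu j))
  have hρprod : ρ = ∏ j ∈ Finset.range n, F j := by
    rw [hρ, Real.exp_add, Real.exp_sum, Real.exp_sum, ← Finset.prod_mul_distrib]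
    refine Finset.prod_congr rfl ?_
    intro k _
    rw [mul_comm (Real.log (lam (v k))) (Δ : ℝ), Real.exp_nat_mul,
      Real.exp_log (hlam k), Real.exp_log (lt_of_lt_of_le zero_lt_one (hmu k))]
  have hρpos : 0 < ρ := by rw [hρ]; exact Real.exp_pos _
  set G : ℕ → ℝ := fun t => (∏ j ∈ Finset.range (t / Δ), F j) * lam (v (t / Δ)) ^ (t % Δ)
    with hG
  have hmain : ∀ (x : ℕ → E), (∀ t : ℕ, x (t + 1) = f (v ((t / Δ) % n)) (x t)) →
      ∀ t, V (v ((t / Δ) % n)) (x t) ≤ G t * V (v 0) (x 0) := by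
    intro x hx t
    induction t with
    | zero => simp [hG, Nat.zero_div]
    | succ t ih =>
      have hrΔ : t % Δ < Δ := Nat.mod_lt t hΔ
      have ht : t = Δ * (t / Δ) + t % Δ := (Nat.div_add_mod t Δ).symm
      have hvq : v (t / Δ % n) = v (t / Δ) := (hvmod (t / Δ)).symm
      rw [hvq] at ih
      by_cases hc : t % Δ + 1 < Δ
      · have hdiv : (t + 1) / Δ = t / Δ := by
          rw [show t + 1 = Δ * (t / Δ) + (t % Δ + 1) by omega, Nat.mul_add_div hΔ,
            Nat.div_eq_of_lt hc, add_zero]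
        have hmod : (t + 1) % Δ = t % Δ + 1 := by
          rw [show t + 1 = Δ * (t / Δ) + (t % Δ + 1) by omega, Nat.mul_add_mod,
            Nat.mod_eq_of_lt hc]
        rw [hdiv]
        calc V (v (t / Δ % n)) (x (t + 1)) = V (v (t / Δ)) (f (v (t / Δ)) (x t)) := by
              rw [hx t, hvq]
          _ ≤ lam (v (t / Δ)) * V (v (t / Δ)) (x t) := hstep (t / Δ) _
          _ ≤ lam (v (t / Δ)) * (G t * V (v 0) (x 0)) :=
              mul_le_mul_of_nonneg_left ih (hlam (t / Δ)).le
          _ = G (t + 1) * V (v 0) (x 0) := by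
              simp only [hG, hdiv, hmod]
              ring
      · have hΔr : Δ = t % Δ + 1 := by omega
        have heq : t + 1 = Δ * (t / Δ + 1) := by rw [mul_add, mul_one]; omega
        have hdiv : (t + 1) / Δ = t / Δ + 1 := by
          rw [heq, Nat.mul_div_cancel_left _ hΔ]
        have hmod : (t + 1) % Δ = 0 := by
          rw [heq, Nat.mul_mod_right]
        rw [hdiv]
        have hvq1 : v ((t / Δ + 1) % n) = v (t / Δ + 1) := (hvmod (t / Δ + 1)).symm
        calc V (v ((t / Δ + 1) % n)) (x (t + 1)) = V (v (t / Δ + 1)) (x (t + 1)) := by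
              rw [hvq1]
          _ ≤ muw (v (t / Δ)) (v (t / Δ + 1)) * V (v (t / Δ)) (x (t + 1)) := hswitch (t / Δ) _
          _ = muw (v (t / Δ)) (v (t / Δ + 1)) * V (v (t / Δ)) (f (v (t / Δ)) (x t)) := by
              rw [hx t, hvq]
          _ ≤ muw (v (t / Δ)) (v (t / Δ + 1)) * (lam (v (t / Δ)) * V (v (t / Δ)) (x t)) :=
              mul_le_mul_of_nonneg_left (hstep (t / Δ) _) (hμnn (t / Δ))
          _ ≤ muw (v (t / Δ)) (v (t / Δ + 1)) * (lam (v (t / Δ)) * (G t * V (v 0) (x 0))) :=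
              mul_le_mul_of_nonneg_left
                (mul_le_mul_of_nonneg_left ih (hlam (t / Δ)).le) (hμnn (t / Δ))
          _ = G (t + 1) * V (v 0) (x 0) := by
              have hpow : ∀ L : ℝ, L ^ Δ = L ^ (t % Δ) * L := by
                intro L
                conv_lhs => rw [hΔr, pow_succ]
              simp only [hG, hdiv, hmod, Finset.prod_range_succ, pow_zero, mul_one, hF]
              rw [hpow]
              ring
  have hprodm : ∀ m, ∏ j ∈ Finset.range (m * n), F j = (∏ j ∈ Finset.range n, F j) ^ m := by
    intro m
    induction m with
    | zero => simp
    | succ m ih =>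
      rw [show (m + 1) * n = m * n + n by ring, Finset.prod_range_add, ih, pow_succ]
      congr 1
      refine Finset.prod_congr rfl ?_
      intro j _
      rw [show m * n + j = j + m * n by ring, hFshift]
  -- constant C
  set C : ℝ := ∏ j ∈ Finset.range n, ((max 1 (lam (v j))) ^ Δ * muw (v j) (v (j + 1))) with hCdef
  have honeprod : ∀ (m : ℕ) (g : ℕ → ℝ), (∀ j, (1:ℝ) ≤ g j) →
      (1:ℝ) ≤ ∏ j ∈ Finset.range m, g j := by
    intro m g hg
    have h := Finset.prod_le_prod (s := Finset.range m) (f := fun _ => (1:ℝ)) (g := g)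
      (fun j _ => zero_le_one) (fun j _ => hg j)
    simpa using h
  have hM1 : ∀ j, (1:ℝ) ≤ (max 1 (lam (v j))) ^ Δ * muw (v j) (v (j + 1)) := by
    intro j
    have h1 : (1:ℝ) ≤ (max 1 (lam (v j))) ^ Δ := one_le_pow₀ (le_max_left 1 _)
    nlinarith [hmu j]
  have hC1 : (1:ℝ) ≤ C := honeprod n _ hM1
  have hGle : ∀ t, G t ≤ C * ρ ^ (t / (n * Δ)) := by
    intro t
    have hnΔ : 0 < n * Δ := Nat.mul_pos hn hΔ
    have hu : t % (n * Δ) < n * Δ := Nat.mod_lt t hnΔ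
    have ht : t = n * Δ * (t / (n * Δ)) + t % (n * Δ) := (Nat.div_add_mod t (n * Δ)).symm
    set m := t / (n * Δ) with hm
    set u := t % (n * Δ) with huDef
    have ht' : t = Δ * (n * m) + u := by rw [ht]; ring_nf
    have hdiv : t / Δ = n * m + u / Δ := by rw [ht', Nat.mul_add_div hΔ]
    have hmod : t % Δ = u % Δ := by rw [ht', Nat.mul_add_mod]
    have hs : u / Δ < n := (Nat.div_lt_iff_lt_mul hΔ).2 hu
    have hsplit : ∏ j ∈ Finset.range (t / Δ), F j
        = ρ ^ m * ∏ j ∈ Finset.range (u / Δ), F j := by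
      rw [hdiv, show n * m = m * n by ring, Finset.prod_range_add, hprodm, ← hρprod]
      congr 1
      refine Finset.prod_congr rfl ?_
      intro j _
      rw [show m * n + j = j + m * n by ring, hFshift]
    have hvs : v (t / Δ) = v (u / Δ) := by
      rw [hdiv, show n * m + u / Δ = u / Δ + m * n by ring, hvshift]
    have hB : (∏ j ∈ Finset.range (u / Δ), F j) * lam (v (u / Δ)) ^ (u % Δ) ≤ C := by
      have h1 : ∏ j ∈ Finset.range (u / Δ), F j
          ≤ ∏ j ∈ Finset.range (u / Δ), ((max 1 (lam (v j))) ^ Δ * muw (v j) (v (j + 1))) := by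
        refine Finset.prod_le_prod (fun j _ => (hFpos j).le) ?_
        intro j _
        exact mul_le_mul_of_nonneg_right
          (pow_le_pow_left₀ (hlam j).le (le_max_right 1 _) Δ) (hμnn j)
      have h2 : lam (v (u / Δ)) ^ (u % Δ)
          ≤ (max 1 (lam (v (u / Δ)))) ^ Δ * muw (v (u / Δ)) (v (u / Δ + 1)) := by
        calc lam (v (u / Δ)) ^ (u % Δ) ≤ (max 1 (lam (v (u / Δ)))) ^ (u % Δ) :=
              pow_le_pow_left₀ (hlam (u / Δ)).le (le_max_right 1 _) _
          _ ≤ (max 1 (lam (v (u / Δ)))) ^ Δ :=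
              pow_le_pow_right₀ (le_max_left 1 _) (Nat.mod_lt u hΔ).le
          _ ≤ (max 1 (lam (v (u / Δ)))) ^ Δ * muw (v (u / Δ)) (v (u / Δ + 1)) :=
              le_mul_of_one_le_right (pow_nonneg (le_trans zero_le_one (le_max_left 1 _)) Δ)
                (hmu (u / Δ))
      calc (∏ j ∈ Finset.range (u / Δ), F j) * lam (v (u / Δ)) ^ (u % Δ)
          ≤ (∏ j ∈ Finset.range (u / Δ), ((max 1 (lam (v j))) ^ Δ * muw (v j) (v (j + 1))))
            * ((max 1 (lam (v (u / Δ)))) ^ Δ * muw (v (u / Δ)) (v (u / Δ + 1))) := by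
            refine mul_le_mul h1 h2 (pow_nonneg (hlam (u / Δ)).le _) ?_
            exact Finset.prod_nonneg fun j _ => le_trans zero_le_one (hM1 j)
        _ = ∏ j ∈ Finset.range (u / Δ + 1), ((max 1 (lam (v j))) ^ Δ * muw (v j) (v (j + 1))) :=
            (Finset.prod_range_succ _ _).symm
        _ ≤ C := by
            have hCsplit : C = (∏ j ∈ Finset.range (u / Δ + 1),
                ((max 1 (lam (v j))) ^ Δ * muw (v j) (v (j + 1))))
                * ∏ j ∈ Finset.range (n - (u / Δ + 1)),
                  ((max 1 (lam (v (u / Δ + 1 + j)))) ^ Δ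
                    * muw (v (u / Δ + 1 + j)) (v (u / Δ + 1 + j + 1))) := by
              rw [hCdef, show n = (u / Δ + 1) + (n - (u / Δ + 1)) by omega,
                Finset.prod_range_add, Nat.add_sub_cancel_left]
            rw [hCsplit]
            refine le_mul_of_one_le_right ?_ (honeprod _ _ fun j => hM1 _)
            exact Finset.prod_nonneg fun j _ => le_trans zero_le_one (hM1 j)
    calc G t = ρ ^ m * ((∏ j ∈ Finset.range (u / Δ), F j) * lam (v (u / Δ)) ^ (u % Δ)) := by
          simp only [hG]
          rw [hsplit, hmod, hvs]; ring
      _ ≤ ρ ^ m * C := mul_le_mul_of_nonneg_left hB (pow_pos hρpos m).le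
      _ = C * ρ ^ m := by ring
  have hkey : ∀ (x : ℕ → E), (∀ t : ℕ, x (t + 1) = f (v ((t / Δ) % n)) (x t)) →
      ∀ t, a ‖x t‖ ≤ C * ρ ^ (t / (n * Δ)) * b ‖x 0‖ := by
    intro x hx t
    have h1 := (hsand (v ((t / Δ) % n)) (x t)).1
    have h2 := hmain x hx t
    have h3 := hGle t
    have h4 := hVnn (v 0) (x 0)
    have h5 := (hsand (v 0) (x 0)).2
    have h6 : (0:ℝ) ≤ C * ρ ^ (t / (n * Δ)) :=
      mul_nonneg (le_trans zero_le_one hC1) (pow_pos hρpos _).le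
    nlinarith
  constructor
  · intro x hx
    constructor
    · intro m
      have h1 := hmain x hx (m * (n * Δ))
      have e1 : m * (n * Δ) / Δ = m * n := by
        rw [show m * (n * Δ) = m * n * Δ by ring, Nat.mul_div_cancel _ hΔ]
      have e2 : m * (n * Δ) % Δ = 0 := by
        rw [show m * (n * Δ) = m * n * Δ by ring, Nat.mul_mod_left]
      simp only [hG, e1, e2, pow_zero, mul_one, Nat.mul_mod_left] at h1
      rwa [hprodm, ← hρprod] at h1
    · -- tendsto
      have hnΔ : 0 < n * Δ := Nat.mul_pos hn hΔ
      have hTen : Filter.Tendsto (fun t : ℕ => C * ρ ^ (t / (n * Δ)) * b ‖x 0‖)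
          Filter.atTop (nhds 0) := by
        have h1 : Filter.Tendsto (fun t : ℕ => t / (n * Δ)) Filter.atTop Filter.atTop :=
          Filter.tendsto_atTop_atTop.2 fun k =>
            ⟨k * (n * Δ), fun t ht => (Nat.le_div_iff_mul_le hnΔ).2 ht⟩
        have h2 : Filter.Tendsto (fun k : ℕ => ρ ^ k) Filter.atTop (nhds 0) :=
          tendsto_pow_atTop_nhds_zero_of_lt_one hρpos.le hρ1
        have h3 := ((h2.comp h1).const_mul C).mul_const (b ‖x 0‖)
        simpa using h3
      rw [Metric.tendsto_atTop]
      intro ε hε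
      have haε : 0 < a ε := by
        have := haS hε
        rwa [ha0] at this
      have hev : ∀ᶠ t in Filter.atTop, C * ρ ^ (t / (n * Δ)) * b ‖x 0‖ < a ε :=
        hTen.eventually_lt_const haε
      obtain ⟨N, hN⟩ := Filter.eventually_atTop.1 hev
      refine ⟨N, fun t ht => ?_⟩
      have h1 := hkey x hx t
      have h2 : a ‖x t‖ < a ε := lt_of_le_of_lt h1 (hN t ht)
      have h3 : ‖x t‖ < ε := haS.lt_iff_lt.1 h2
      rw [Real.dist_eq, sub_zero, abs_of_nonneg (norm_nonneg _)]
      exact h3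
  · refine ⟨C, hC1, ?_⟩
    intro x hx t
    set T := C * ρ ^ (t / (n * Δ)) * b ‖x 0‖ with hT
    have hTnn : 0 ≤ T := by
      have hb0' : 0 ≤ b ‖x 0‖ := by
        have := hbS.monotone (norm_nonneg (x 0))
        rwa [hb0] at this
      exact mul_nonneg (mul_nonneg (le_trans zero_le_one hC1) (pow_pos hρpos _).le) hb0'
    obtain ⟨N, hN1, hN2⟩ := ((haT.eventually_ge_atTop T).and (Filter.eventually_ge_atTop 0)).exists
    have hsub : Set.Icc (a 0) (a N) ⊆ a '' Set.Icc 0 N :=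
      intermediate_value_Icc hN2 haC.continuousOn
    obtain ⟨y, _, hy⟩ := hsub ⟨by rw [ha0]; exact hTnn, hN1⟩
    have hinv : a (Function.invFun a T) = T := Function.invFun_eq ⟨y, hy⟩
    have h1 := hkey x hx t
    rw [← hT] at h1
    rw [← hinv] at h1
    exact haS.le_iff_le.1 h1
end

section
/- Let X_1, ..., X_n be random variables with X_k ∈ [−A, A] almost surely and E[X_k | X_1, ..., X_{k-1}, X_{k+1}, ..., X_n] ≤ α almost surely, and let Y_1, ..., Y_n be random variables with Y_k ∈ (0, B] almost surely and E[Y_k | all other X's and Y's] = β almost surely, where α < β. Then P(Σ_{k=1}^n X_k − Σ_{k=1}^n Y_k ≥ 0) ≤ exp(−(1/2)((β−α)/(A+B))² n). -/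
/-!
With `c = A + B` and `δ = β - α`, the increments `D k = X k - Y k` lie in `[-c, c]` and, given
the past `(X j, Y j)_{j < k}`, have conditional mean at most `-δ` (tower property applied to the
two hypotheses on conditional means). Bounding `exp (t D)` by its chord over `[-c, c]` gives
`E[exp (t D k) | past] ≤ cosh r - r sinh r ≤ exp (-r² / 2)` for `t = δ / c²`, `r = δ / c`.
Peeling off the increments one at a time then bounds `E[exp (t Σ D)]` by `exp (-r² / 2) ^ n`,
and Chernoff's bound `P(Σ D ≥ 0) ≤ E[exp (t Σ D)]` concludes.
-/

open MeasureTheory ProbabilityTheory Real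

theorem Real.cosh_sub_mul_sinh_le (r : ℝ) : cosh r - r * sinh r ≤ 1 - r ^ 2 / 2 := by
  set g : ℝ → ℝ := fun y => cosh y - y * sinh y + y ^ 2 / 2
  have hg' : ∀ y, HasDerivAt g (y * (1 - cosh y)) y := fun y => by
    have := ((hasDerivAt_cosh y).sub ((hasDerivAt_id' y).mul (hasDerivAt_sinh y))).add
      ((hasDerivAt_pow 2 y).div_const 2)
    exact this.congr_deriv (by push_cast; ring)
  have hg_anti : AntitoneOn g (Set.Ici 0) :=
    antitoneOn_of_hasDerivWithinAt_nonpos (convex_Ici 0) (by fun_prop)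
      (fun y _ => (hg' y).hasDerivWithinAt) fun y hy => by
        rw [interior_Ici, Set.mem_Ioi] at hy
        exact mul_nonpos_of_nonneg_of_nonpos hy.le (sub_nonpos.mpr (one_le_cosh y))
  have hg_abs : g |r| = g r := by
    rcases abs_cases r with ⟨h, _⟩ | ⟨h, _⟩ <;> simp [g, h, sinh_neg]
  have := hg_anti Set.self_mem_Ici (abs_nonneg r) (abs_nonneg r)
  simp only [hg_abs, g, cosh_zero, sinh_zero] at this
  linarith

namespace MeasureTheory

variable {Ω : Type*} {m mΩ : MeasurableSpace Ω} {μ : Measure Ω}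

theorem integrable_exp_of_ae_le [IsFiniteMeasure μ] {f : Ω → ℝ} (hf : AEStronglyMeasurable f μ)
    {C : ℝ} (hfC : ∀ᵐ ω ∂μ, f ω ≤ C) : Integrable (fun ω => exp (f ω)) μ :=
  Integrable.of_bound (continuous_exp.comp_aestronglyMeasurable hf) (exp C) <| by
    filter_upwards [hfC] with ω hω
    rw [norm_of_nonneg (exp_pos _).le]
    exact exp_le_exp.mpr hω

theorem integrable_exp_sum [IsFiniteMeasure μ] {ι : Type*} (s : Finset ι) {D : ι → Ω → ℝ}
    (hD : ∀ k, Measurable (D k)) {c : ℝ} (hDc : ∀ k, ∀ᵐ ω ∂μ, D k ω ≤ c) :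
    Integrable (fun ω => exp (∑ k ∈ s, D k ω)) μ := by
  refine integrable_exp_of_ae_le (Finset.measurable_sum s fun k _ => hD k).aestronglyMeasurable
    (C := s.card • c) ?_
  filter_upwards [(Filter.eventually_all_finset s).mpr fun k _ => hDc k] with ω hω
  exact Finset.sum_le_card_nsmul s _ c hω

theorem condExp_le_const_of_le [IsFiniteMeasure μ] {m₁ m₂ : MeasurableSpace Ω} (h₁₂ : m₁ ≤ m₂)
    (h₂ : m₂ ≤ mΩ) {f : Ω → ℝ} {a : ℝ} (hf : μ[f | m₂] ≤ᵐ[μ] fun _ => a) :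
    μ[f | m₁] ≤ᵐ[μ] fun _ => a := by
  have := condExp_mono (m := m₁) integrable_condExp (integrable_const a) hf
  rw [condExp_const (h₁₂.trans h₂)] at this
  exact (condExp_condExp_of_le h₁₂ h₂).symm.trans_le this

theorem condExp_eq_const_of_le [IsFiniteMeasure μ] {m₁ m₂ : MeasurableSpace Ω} (h₁₂ : m₁ ≤ m₂)
    (h₂ : m₂ ≤ mΩ) {f : Ω → ℝ} {a : ℝ} (hf : μ[f | m₂] =ᵐ[μ] fun _ => a) :
    μ[f | m₁] =ᵐ[μ] fun _ => a := by
  have := condExp_congr_ae (m := m₁) hf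
  rw [condExp_const (h₁₂.trans h₂)] at this
  exact (condExp_condExp_of_le h₁₂ h₂).symm.trans this

/-- The exponent `δ / c ^ 2` is the one that optimizes the resulting Chernoff bound. -/
theorem condExp_exp_mul_le_of_condExp_le [IsFiniteMeasure μ] (hm : m ≤ mΩ) {D : Ω → ℝ}
    (hD : AEStronglyMeasurable D μ) {c δ : ℝ} (hc : 0 < c) (hδ : 0 ≤ δ)
    (hDc : ∀ᵐ ω ∂μ, |D ω| ≤ c) (hdrift : μ[D | m] ≤ᵐ[μ] fun _ => -δ) :
    μ[fun ω => exp (δ / c ^ 2 * D ω) | m] ≤ᵐ[μ] fun _ => exp (-(δ / c) ^ 2 / 2) := by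
  set r := δ / c with hr_def
  have hr : 0 ≤ r := div_nonneg hδ hc.le
  have hD_int : Integrable D μ := Integrable.of_bound hD c (by simpa only [norm_eq_abs] using hDc)
  have hchord : (fun ω => exp (δ / c ^ 2 * D ω)) ≤ᵐ[μ] fun ω => sinh r / c * D ω + cosh r := by
    filter_upwards [hDc] with ω hω
    have hω' : |D ω / c| ≤ 1 := by rwa [abs_div, abs_of_pos hc, div_le_one hc]
    calc exp (δ / c ^ 2 * D ω) = exp (D ω / c * r) := by rw [hr_def]; congr 1; field_simp
      _ ≤ cosh r + D ω / c * sinh r := exp_mul_le_cosh_add_mul_sinh hω' r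
      _ = sinh r / c * D ω + cosh r := by ring
  have hexp_int : Integrable (fun ω => exp (δ / c ^ 2 * D ω)) μ := by
    refine integrable_exp_of_ae_le (hD.const_mul _) (C := δ / c ^ 2 * c) ?_
    filter_upwards [hDc] with ω hω
    exact mul_le_mul_of_nonneg_left (le_of_abs_le hω) (by positivity)
  calc μ[fun ω => exp (δ / c ^ 2 * D ω) | m]
      ≤ᵐ[μ] μ[fun ω => sinh r / c * D ω + cosh r | m] :=
        condExp_mono hexp_int ((hD_int.const_mul _).add (integrable_const _)) hchord
    _ =ᵐ[μ] fun ω => sinh r / c * μ[D | m] ω + cosh r :=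
        ((ContinuousLinearMap.mul ℝ ℝ (sinh r / c)).comp_condExp_add_const_comm hm hD_int _).symm
    _ ≤ᵐ[μ] fun _ => exp (-r ^ 2 / 2) := by
        filter_upwards [hdrift] with ω hω
        have hsinh : 0 ≤ sinh r / c := div_nonneg (sinh_nonneg_iff.mpr hr) hc.le
        calc sinh r / c * μ[D | m] ω + cosh r ≤ sinh r / c * -δ + cosh r := by gcongr
          _ = cosh r - r * sinh r := by rw [hr_def]; field_simp; ring
          _ ≤ 1 - r ^ 2 / 2 := cosh_sub_mul_sinh_le r
          _ ≤ exp (-r ^ 2 / 2) := by linarith [add_one_le_exp (-r ^ 2 / 2)]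

theorem integral_exp_sum_le_pow [IsProbabilityMeasure μ] {K c : ℝ} (hK : 0 ≤ K) :
    ∀ {n : ℕ} {ℱ : Fin n → MeasurableSpace Ω} {D : Fin n → Ω → ℝ}, (∀ k, ℱ k ≤ mΩ) →
      (∀ k, Measurable (D k)) → (∀ j k, j < k → Measurable[ℱ k] (D j)) →
      (∀ k, ∀ᵐ ω ∂μ, D k ω ≤ c) → (∀ k, μ[fun ω => exp (D k ω) | ℱ k] ≤ᵐ[μ] fun _ => K) →
      ∫ ω, exp (∑ k, D k ω) ∂μ ≤ K ^ n
  | 0, _, _, _, _, _, _, _ => by simp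
  | n + 1, ℱ, D, hℱ, hD, hD_past, hDc, hstep => by
    set S : Ω → ℝ := fun ω => ∑ k : Fin n, D k.castSucc ω
    have hS_past : Measurable[ℱ (Fin.last n)] S :=
      Finset.measurable_sum _ fun k _ => hD_past _ _ (Fin.castSucc_lt_last k)
    have hexp_sum : (fun ω => exp (∑ k, D k ω)) = fun ω => exp (S ω) * exp (D (Fin.last n) ω) := by
      simp only [Fin.sum_univ_castSucc, exp_add, S]
    have hpull : μ[fun ω => exp (S ω) * exp (D (Fin.last n) ω) | ℱ (Fin.last n)]
        =ᵐ[μ] fun ω => exp (S ω) * μ[fun ω => exp (D (Fin.last n) ω) | ℱ (Fin.last n)] ω :=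
      condExp_mul_of_stronglyMeasurable_left hS_past.exp.stronglyMeasurable
        (hexp_sum ▸ integrable_exp_sum _ hD hDc :)
        (integrable_exp_of_ae_le (hD _).aestronglyMeasurable (hDc _))
    calc ∫ ω, exp (∑ k, D k ω) ∂μ
        = ∫ ω, μ[fun ω => exp (S ω) * exp (D (Fin.last n) ω) | ℱ (Fin.last n)] ω ∂μ := by
          rw [integral_condExp (hℱ _), hexp_sum]
      _ ≤ ∫ ω, exp (S ω) * K ∂μ := by
          refine integral_mono_ae integrable_condExp
            ((integrable_exp_sum _ (fun k => hD _) fun k => hDc _).mul_const K) ?_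
          filter_upwards [hpull, hstep (Fin.last n)] with ω hpull_ω hstep_ω
          rw [hpull_ω]
          exact mul_le_mul_of_nonneg_left hstep_ω (exp_pos _).le
      _ ≤ K ^ n * K := by
          rw [integral_mul_const]
          exact mul_le_mul_of_nonneg_right
            (integral_exp_sum_le_pow hK (fun k => hℱ _) (fun k => hD _)
              (fun j k hjk => hD_past _ _ (Fin.castSucc_lt_castSucc_iff.mpr hjk))
              (fun k => hDc _) (fun k => hstep _)) hK
      _ = K ^ (n + 1) := (pow_succ K n).symm

theorem measureReal_sum_nonneg_le [IsProbabilityMeasure μ] {n : ℕ} {ℱ : Fin n → MeasurableSpace Ω}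
    (hℱ : ∀ k, ℱ k ≤ mΩ) {D : Fin n → Ω → ℝ} (hD : ∀ k, Measurable (D k))
    (hD_past : ∀ j k, j < k → Measurable[ℱ k] (D j)) {c δ : ℝ} (hc : 0 < c) (hδ : 0 ≤ δ)
    (hDc : ∀ k, ∀ᵐ ω ∂μ, |D k ω| ≤ c) (hdrift : ∀ k, μ[D k | ℱ k] ≤ᵐ[μ] fun _ => -δ) :
    μ.real {ω | 0 ≤ ∑ k, D k ω} ≤ exp (-(δ / c) ^ 2 / 2 * n) := by
  set t := δ / c ^ 2
  have htD_le : ∀ k, ∀ᵐ ω ∂μ, t * D k ω ≤ t * c := fun k => (hDc k).mono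
    fun _ h => mul_le_mul_of_nonneg_left (le_of_abs_le h) (by positivity)
  have hsum : ∀ ω, t * ∑ k, D k ω = ∑ k, t * D k ω := fun ω => Finset.mul_sum _ _ _
  have hexp_int : Integrable (fun ω => exp (t * ∑ k, D k ω)) μ := by
    simp_rw [hsum]
    exact integrable_exp_sum _ (fun k => (hD k).const_mul t) htD_le
  calc μ.real {ω | 0 ≤ ∑ k, D k ω}
      ≤ exp (-t * 0) * mgf (fun ω => ∑ k, D k ω) μ t :=
        measure_ge_le_exp_mul_mgf 0 (by positivity) hexp_int
    _ = ∫ ω, exp (∑ k, t * D k ω) ∂μ := by simp only [mgf, hsum, mul_zero, exp_zero, one_mul]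
    _ ≤ exp (-(δ / c) ^ 2 / 2) ^ n :=
        integral_exp_sum_le_pow (exp_pos _).le hℱ (fun k => (hD k).const_mul t)
          (fun j k hjk => (hD_past j k hjk).const_mul t) htD_le fun k =>
            condExp_exp_mul_le_of_condExp_le (hℱ k) (hD k).aestronglyMeasurable hc hδ (hDc k)
              (hdrift k)
    _ = exp (-(δ / c) ^ 2 / 2 * n) := by rw [← exp_nat_mul, mul_comm]

end MeasureTheory

section JointPast

variable {Ω ι β : Type*} {mΩ : MeasurableSpace Ω} [Preorder ι] [MeasurableSpace β]
  {X Y : ι → Ω → β}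

abbrev jointPast (X Y : ι → Ω → β) (k : ι) : MeasurableSpace Ω :=
  (⨆ (j) (_ : j < k), MeasurableSpace.comap (X j) inferInstance) ⊔
    ⨆ (j) (_ : j < k), MeasurableSpace.comap (Y j) inferInstance

theorem jointPast_le (hX : ∀ j, Measurable (X j)) (hY : ∀ j, Measurable (Y j)) (k : ι) :
    jointPast X Y k ≤ mΩ :=
  sup_le (iSup₂_le fun j _ => (hX j).comap_le) (iSup₂_le fun j _ => (hY j).comap_le)

theorem jointPast_le_iSup_ne_sup_iSup (k : ι) :
    jointPast X Y k ≤ (⨆ (j) (_ : j ≠ k), MeasurableSpace.comap (X j) inferInstance) ⊔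
      ⨆ j, MeasurableSpace.comap (Y j) inferInstance :=
  sup_le_sup (biSup_mono fun _ => ne_of_lt) (iSup₂_le_iSup _ _)

theorem jointPast_le_iSup_sup_iSup_ne (k : ι) :
    jointPast X Y k ≤ (⨆ j, MeasurableSpace.comap (X j) inferInstance) ⊔
      ⨆ (j) (_ : j ≠ k), MeasurableSpace.comap (Y j) inferInstance :=
  sup_le_sup (iSup₂_le_iSup _ _) (biSup_mono fun _ => ne_of_lt)

theorem measurable_jointPast_left {j k : ι} (hjk : j < k) : Measurable[jointPast X Y k] (X j) :=
  Measurable.of_comap_le <| le_sup_of_le_left <|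
    le_iSup₂ (f := fun j (_ : j < k) => MeasurableSpace.comap (X j) inferInstance) j hjk

theorem measurable_jointPast_right {j k : ι} (hjk : j < k) : Measurable[jointPast X Y k] (Y j) :=
  Measurable.of_comap_le <| le_sup_of_le_right <|
    le_iSup₂ (f := fun j (_ : j < k) => MeasurableSpace.comap (Y j) inferInstance) j hjk

end JointPast

theorem condExp_sub_jointPast_le {Ω ι : Type*} {mΩ : MeasurableSpace Ω} {μ : Measure Ω}
    [IsFiniteMeasure μ] [Preorder ι] {X Y : ι → Ω → ℝ} (hX : ∀ j, Measurable (X j))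
    (hY : ∀ j, Measurable (Y j)) {k : ι} (hX_int : Integrable (X k) μ)
    (hY_int : Integrable (Y k) μ) {a b : ℝ}
    (hX_cond : μ[X k | (⨆ (j) (_ : j ≠ k), MeasurableSpace.comap (X j) inferInstance) ⊔
      ⨆ j, MeasurableSpace.comap (Y j) inferInstance] ≤ᵐ[μ] fun _ => a)
    (hY_cond : μ[Y k | (⨆ j, MeasurableSpace.comap (X j) inferInstance) ⊔
      ⨆ (j) (_ : j ≠ k), MeasurableSpace.comap (Y j) inferInstance] =ᵐ[μ] fun _ => b) :
    μ[X k - Y k | jointPast X Y k] ≤ᵐ[μ] fun _ => a - b := by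
  filter_upwards [condExp_sub hX_int hY_int (jointPast X Y k),
    condExp_le_const_of_le (jointPast_le_iSup_ne_sup_iSup k)
      (sup_le (iSup₂_le fun j _ => (hX j).comap_le) (iSup_le fun j => (hY j).comap_le)) hX_cond,
    condExp_eq_const_of_le (jointPast_le_iSup_sup_iSup_ne k)
      (sup_le (iSup_le fun j => (hX j).comap_le) (iSup₂_le fun j _ => (hY j).comap_le)) hY_cond]
    with ω hsub hX_ω hY_ω
  rw [hsub, Pi.sub_apply, hY_ω]
  exact sub_le_sub_right hX_ω b

/-- Azuma–Hoeffding estimate for the sum `Σ X k − Σ Y k`, where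
`X k ∈ [−A, A]` have conditional mean (given all the other variables) at most `α` and
`Y k ∈ (0, B]` have conditional mean `β > α`:
`P(Σ X k − Σ Y k ≥ 0) ≤ exp (−(1/2)((β−α)/(A+B))² n)`. -/
theorem stmt_11 {Ω : Type*} [MeasurableSpace Ω] (μ : Measure Ω) [IsProbabilityMeasure μ]
    (n : ℕ) (X Y : Fin n → Ω → ℝ)
    (hXmeas : ∀ k, Measurable (X k)) (hYmeas : ∀ k, Measurable (Y k))
    (A B α β : ℝ) (hA : 0 < A) (hB : 0 < B) (hαβ : α < β)
    (hXbdd : ∀ k, ∀ᵐ ω ∂μ, X k ω ∈ Set.Icc (-A) A)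
    (hXcond : ∀ k, ∀ᵐ ω ∂μ,
      (μ[X k |
        (⨆ (j : Fin n) (_ : j ≠ k), MeasurableSpace.comap (X j) inferInstance) ⊔
        (⨆ j : Fin n, MeasurableSpace.comap (Y j) inferInstance)]) ω ≤ α)
    (hYbdd : ∀ k, ∀ᵐ ω ∂μ, 0 < Y k ω ∧ Y k ω ≤ B)
    (hYcond : ∀ k,
      μ[Y k |
        (⨆ j : Fin n, MeasurableSpace.comap (X j) inferInstance) ⊔
        (⨆ (j : Fin n) (_ : j ≠ k), MeasurableSpace.comap (Y j) inferInstance)]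
        =ᵐ[μ] fun _ => β) :
    (μ {ω | 0 ≤ (∑ k, X k ω) - ∑ k, Y k ω}).toReal ≤
      Real.exp (-(1 / 2) * ((β - α) / (A + B)) ^ 2 * n) := by
  have hD_bdd : ∀ k, ∀ᵐ ω ∂μ, |X k ω - Y k ω| ≤ A + B := fun k => by
    filter_upwards [hXbdd k, hYbdd k] with ω ⟨hX₁, hX₂⟩ ⟨hY₁, hY₂⟩
    exact abs_le.mpr ⟨by linarith, by linarith⟩
  have hdrift : ∀ k, μ[X k - Y k | jointPast X Y k] ≤ᵐ[μ] fun _ => -(β - α) := fun k => by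
    have hX_int := Integrable.of_mem_Icc _ _ (hXmeas k).aemeasurable (hXbdd k)
    have hY_int := Integrable.of_mem_Icc 0 B (hYmeas k).aemeasurable
      ((hYbdd k).mono fun _ h => ⟨h.1.le, h.2⟩)
    rw [neg_sub]
    exact condExp_sub_jointPast_le hXmeas hYmeas hX_int hY_int (hXcond k) (hYcond k)
  have := measureReal_sum_nonneg_le (jointPast_le hXmeas hYmeas)
    (fun k => (hXmeas k).sub (hYmeas k))
    (fun j k hjk => (measurable_jointPast_left hjk).sub (measurable_jointPast_right hjk))
    (add_pos hA hB) (sub_pos.mpr hαβ).le hD_bdd hdrift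
  convert this using 2
  · simp [Measure.real, Finset.sum_sub_distrib]
  · ring
end

section
/- Combining the connectivity and weight hypotheses: if G(P, E(P)) is nicely connected with parameter m = ⌊Φ(|P_S|)⌋ and nicely Δ-weighted with constants A, B, α, β (α < β), then a cycle W output by Algorithm 1 satisfies Γ(W) < 0 (is Δ-contractive with dwell parameter Δ on each vertex) with probability at least 1 − exp(−(1/2)((α−β)/(A+B))² m). -/
/-!
Put `X k := wE k - wV k * Δ`, so that `Γ(W) = ∑ k, X k`. Each increment lies in `[-A - B, A]`,
and by the tower property its conditional mean given the weights of the earlier vertices and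
edges is at most `α - β < 0`. The conditional Hoeffding lemma bounds the conditional moment
generating function of each increment; multiplying these bounds along the cycle and applying
Markov's inequality gives the Azuma–Hoeffding estimate `exp (-2 n (α - β)² / (2A + B)²)` for
`P(Γ(W) ≥ 0)`, which is at most the claimed bound because `n ≥ m` and `2A + B ≤ 2 (A + B)`.
-/

open MeasureTheory ProbabilityTheory Real

noncomputable def expChord (t a b x : ℝ) : ℝ :=
  exp (t * a) + (exp (t * b) - exp (t * a)) / (b - a) * (x - a)

lemma exp_mul_le_expChord {a b x : ℝ} (hab : a < b) (hx : x ∈ Set.Icc a b) (t : ℝ) :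
    exp (t * x) ≤ expChord t a b x := by
  have hba : 0 < b - a := sub_pos.2 hab
  have hconv := convexOn_exp.2 (Set.mem_univ (t * a)) (Set.mem_univ (t * b))
    (div_nonneg (sub_nonneg.2 hx.2) hba.le) (div_nonneg (sub_nonneg.2 hx.1) hba.le)
    (by field_simp; ring)
  simp only [smul_eq_mul] at hconv
  calc exp (t * x) = exp ((b - x) / (b - a) * (t * a) + (x - a) / (b - a) * (t * b)) := by
        congr 1; field_simp; ring
    _ ≤ _ := hconv
    _ = expChord t a b x := by unfold expChord; field_simp; ring

lemma expChord_le {a b d : ℝ} (hab : a < b) (hd : d ∈ Set.Icc a b) (t : ℝ) :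
    expChord t a b d ≤ exp (t * d + t ^ 2 * (b - a) ^ 2 / 8) := by
  have hba : 0 < b - a := sub_pos.2 hab
  set p := (d - a) / (b - a)
  have hp : p ∈ unitInterval :=
    ⟨div_nonneg (sub_nonneg.2 hd.1) hba.le, (div_le_one hba).2 (by linarith [hd.2])⟩
  -- Hoeffding's lemma for the centred law with mass `p` at `b - d` and `1 - p` at `a - d`.
  let ν : Measure ℝ := bernoulliMeasure (b - d) (a - d) ⟨p, hp⟩
  have hmean : ν[id] = 0 := by
    rw [integral_bernoulliMeasure]; simp only [id, smul_eq_mul, p]; field_simp; ring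
  have hmem : ∀ᵐ x ∂ν, id x ∈ Set.Icc (a - d) (b - d) := by
    refine ae_iff.2 (bernoulliMeasure_apply_of_notMem_of_notMem _ measurableSet_Icc.compl ?_ ?_)
    all_goals simp; linarith
  have := (hasSubgaussianMGF_of_mem_Icc_of_integral_eq_zero aemeasurable_id hmem hmean).mgf_le t
  rw [mgf, integral_bernoulliMeasure] at this
  simp only [id, smul_eq_mul, sub_sub_sub_cancel_right, NNReal.coe_pow, NNReal.coe_div,
    coe_nnnorm, norm_eq_abs, abs_of_pos hba, NNReal.coe_ofNat] at this
  calc expChord t a b d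
      = exp (t * d) * (p * exp (t * (b - d)) + (1 - p) * exp (t * (a - d))) := by
        simp only [expChord, p, mul_sub, exp_sub]; field_simp; ring
    _ ≤ exp (t * d) * exp (t ^ 2 * (b - a) ^ 2 / 8) := by
        gcongr; exact this.trans_eq (congrArg exp (by ring))
    _ = exp (t * d + t ^ 2 * (b - a) ^ 2 / 8) := (exp_add _ _).symm

section Conditional

variable {Ω : Type*} {m m₀ : MeasurableSpace Ω} {μ : Measure Ω}

lemma le_of_ae_le_of_condExp_le [IsProbabilityMeasure μ] (hm : m ≤ m₀) {X : Ω → ℝ} {a d : ℝ}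
    (hX : Integrable X μ) (ha : ∀ᵐ ω ∂μ, a ≤ X ω) (hd : μ[X|m] ≤ᵐ[μ] fun _ => d) : a ≤ d := by
  have h := condExp_mono (m := m) (integrable_const a) hX ha
  rw [condExp_const hm] at h
  obtain ⟨ω, h₁, h₂⟩ := (h.and hd).exists
  exact h₁.trans h₂

lemma condExp_const_add_mul [IsFiniteMeasure μ] (hm : m ≤ m₀) {X : Ω → ℝ} (hX : Integrable X μ)
    (c c' : ℝ) : μ[fun ω => c + c' * X ω|m] =ᵐ[μ] fun ω => c + c' * (μ[X|m]) ω := by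
  filter_upwards [condExp_add (integrable_const c) (hX.smul c') m, condExp_smul c' X m]
    with ω h₁ h₂
  simp only [Pi.add_apply, Pi.smul_apply, smul_eq_mul, condExp_const hm] at h₁ h₂
  rw [← h₂]
  exact h₁

lemma ae_condExp_le_const_of_le [IsFiniteMeasure μ] {m₁ m₂ : MeasurableSpace Ω} (h₁₂ : m₁ ≤ m₂)
    (h₂ : m₂ ≤ m₀) {f : Ω → ℝ} {c : ℝ} (hf : μ[f|m₂] ≤ᵐ[μ] fun _ => c) :
    μ[f|m₁] ≤ᵐ[μ] fun _ => c := by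
  have h := condExp_mono (m := m₁) integrable_condExp (integrable_const c) hf
  rw [condExp_const (h₁₂.trans h₂)] at h
  exact (condExp_condExp_of_le h₁₂ h₂).symm.le.trans h

lemma condExp_exp_mul_le_of_mem_Icc [IsProbabilityMeasure μ] (hm : m ≤ m₀) {X : Ω → ℝ}
    {a b d t : ℝ} (hX : AEMeasurable X μ) (hab : a < b) (hXab : ∀ᵐ ω ∂μ, X ω ∈ Set.Icc a b)
    (hdb : d ≤ b) (hd : μ[X|m] ≤ᵐ[μ] fun _ => d) (ht : 0 ≤ t) :
    μ[fun ω => exp (t * X ω)|m] ≤ᵐ[μ] fun _ => exp (t * d + t ^ 2 * (b - a) ^ 2 / 8) := by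
  have hXint := Integrable.of_mem_Icc a b hX hXab
  have had := le_of_ae_le_of_condExp_le hm hXint (hXab.mono fun _ h => h.1) hd
  set σ := (exp (t * b) - exp (t * a)) / (b - a)
  have hσ : 0 ≤ σ := div_nonneg
    (sub_nonneg.2 (exp_le_exp.2 (mul_le_mul_of_nonneg_left hab.le ht))) (sub_pos.2 hab).le
  have hchord : (fun ω => expChord t a b (X ω)) = fun ω => (exp (t * a) - σ * a) + σ * X ω := by
    funext ω; simp only [expChord, σ]; ring
  have hchord_int : Integrable (fun ω => expChord t a b (X ω)) μ :=
    hchord ▸ (integrable_const _).add (hXint.const_mul σ)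
  calc μ[fun ω => exp (t * X ω)|m]
      ≤ᵐ[μ] μ[fun ω => expChord t a b (X ω)|m] :=
        condExp_mono (integrable_exp_mul_of_mem_Icc hX hXab) hchord_int
          (hXab.mono fun _ h => exp_mul_le_expChord hab h t)
    _ =ᵐ[μ] fun ω => (exp (t * a) - σ * a) + σ * (μ[X|m]) ω :=
        hchord ▸ condExp_const_add_mul hm hXint _ _
    _ ≤ᵐ[μ] fun _ => exp (t * d + t ^ 2 * (b - a) ^ 2 / 8) := by
        filter_upwards [hd] with ω hω
        calc exp (t * a) - σ * a + σ * (μ[X|m]) ω = exp (t * a) + σ * ((μ[X|m]) ω - a) := by ring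
          _ ≤ expChord t a b d := by unfold expChord; gcongr
          _ ≤ _ := expChord_le hab ⟨had, hdb⟩ t

end Conditional

section Martingale

variable {Ω : Type*} {m₀ : MeasurableSpace Ω} {μ : Measure Ω} (ℱ : Filtration ℕ m₀)
  {n : ℕ} {Y : Fin n → Ω → ℝ} {a b : ℝ}

lemma measurable_sum_of_measurable_succ (hY : ∀ k : Fin n, Measurable[ℱ (k + 1)] (Y k)) :
    Measurable[ℱ n] fun ω => ∑ k, Y k ω :=
  Finset.measurable_fun_sum _ fun k _ => (hY k).mono (ℱ.mono k.isLt) le_rfl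

lemma ae_sum_mem_Icc (h : ∀ k, ∀ᵐ ω ∂μ, Y k ω ∈ Set.Icc a b) :
    ∀ᵐ ω ∂μ, ∑ k, Y k ω ∈ Set.Icc (n * a) (n * b) := by
  filter_upwards [ae_all_iff.2 h] with ω hω
  have h₁ := Finset.card_nsmul_le_sum Finset.univ (fun k => Y k ω) a fun k _ => (hω k).1
  have h₂ := Finset.sum_le_card_nsmul Finset.univ (fun k => Y k ω) b fun k _ => (hω k).2
  simp only [Finset.card_univ, Fintype.card_fin, nsmul_eq_mul] at h₁ h₂
  exact ⟨h₁, h₂⟩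

lemma integral_exp_mul_sum_le_s15 [IsProbabilityMeasure μ] {t q : ℝ} :
    ∀ {n : ℕ} {Y : Fin n → Ω → ℝ}, (∀ k : Fin n, Measurable[ℱ (k + 1)] (Y k)) →
      (∀ k, ∀ᵐ ω ∂μ, Y k ω ∈ Set.Icc a b) →
      (∀ k : Fin n, μ[fun ω => exp (t * Y k ω)|ℱ k] ≤ᵐ[μ] fun _ => exp q) →
      ∫ ω, exp (t * ∑ k, Y k ω) ∂μ ≤ exp (n * q)
  | 0, Y, _, _, _ => by simp
  | n + 1, Y, hY, hbdd, hstep => by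
    set f := fun ω => exp (t * ∑ k : Fin n, Y k.castSucc ω)
    set g := fun ω => exp (t * Y (Fin.last n) ω)
    have hsplit : (fun ω => exp (t * ∑ k, Y k ω)) = f * g := by
      funext ω; simp only [Fin.sum_univ_castSucc, mul_add, exp_add, Pi.mul_apply, f, g]
    have hY' : ∀ k : Fin n, Measurable[ℱ (k + 1)] (Y k.castSucc) := fun k => hY k.castSucc
    have hf_meas : Measurable[ℱ n] f :=
      ((measurable_sum_of_measurable_succ ℱ hY').const_mul t).exp
    have hf : Integrable f μ := integrable_exp_mul_of_mem_Icc
      ((measurable_sum_of_measurable_succ ℱ hY').mono (ℱ.le n) le_rfl).aemeasurable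
      (ae_sum_mem_Icc fun k => hbdd k.castSucc)
    have hg : Integrable g μ := integrable_exp_mul_of_mem_Icc
      ((hY (Fin.last n)).mono (ℱ.le _) le_rfl).aemeasurable (hbdd (Fin.last n))
    have hfg : Integrable (f * g) μ := hsplit ▸ integrable_exp_mul_of_mem_Icc
      ((measurable_sum_of_measurable_succ ℱ hY).mono (ℱ.le _) le_rfl).aemeasurable
      (ae_sum_mem_Icc hbdd)
    have hgq : μ[g|ℱ n] ≤ᵐ[μ] fun _ => exp q := by simpa using hstep (Fin.last n)
    calc ∫ ω, exp (t * ∑ k, Y k ω) ∂μ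
        = ∫ ω, (μ[f * g|ℱ n]) ω ∂μ := by rw [hsplit, integral_condExp (ℱ.le n)]
      _ ≤ ∫ ω, f ω * exp q ∂μ := by
          refine integral_mono_ae integrable_condExp (hf.mul_const _) ?_
          filter_upwards [condExp_mul_of_stronglyMeasurable_left hf_meas.stronglyMeasurable hfg hg,
            hgq] with ω h₁ h₂
          rw [h₁]
          exact mul_le_mul_of_nonneg_left h₂ (exp_pos _).le
      _ = (∫ ω, f ω ∂μ) * exp q := integral_mul_const _ _
      _ ≤ exp (n * q) * exp q := by
          gcongr
          exact integral_exp_mul_sum_le_s15 hY' (fun k => hbdd k.castSucc) fun k => hstep k.castSucc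
      _ = exp ((n + 1 : ℕ) * q) := by rw [← exp_add]; push_cast; ring_nf

theorem measureReal_sum_nonneg_le [IsProbabilityMeasure μ] {d : ℝ}
    (hY : ∀ k : Fin n, Measurable[ℱ (k + 1)] (Y k)) (hab : a < b) (hd : d ≤ 0) (hdb : d ≤ b)
    (hbdd : ∀ k, ∀ᵐ ω ∂μ, Y k ω ∈ Set.Icc a b)
    (hdrift : ∀ k : Fin n, μ[Y k|ℱ k] ≤ᵐ[μ] fun _ => d) :
    μ.real {ω | 0 ≤ ∑ k, Y k ω} ≤ exp (-(2 * n * d ^ 2 / (b - a) ^ 2)) := by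
  have hba : 0 < b - a := sub_pos.2 hab
  set t := -4 * d / (b - a) ^ 2
  have ht : 0 ≤ t := div_nonneg (by linarith) (by positivity)
  have hS : AEMeasurable (fun ω => ∑ k, Y k ω) μ :=
    ((measurable_sum_of_measurable_succ ℱ hY).mono (ℱ.le n) le_rfl).aemeasurable
  have hstep (k : Fin n) := condExp_exp_mul_le_of_mem_Icc (ℱ.le k)
    ((hY k).mono (ℱ.le _) le_rfl).aemeasurable hab (hbdd k) hdb (hdrift k) ht
  calc μ.real {ω | 0 ≤ ∑ k, Y k ω}
      ≤ exp (-t * 0) * mgf (fun ω => ∑ k, Y k ω) μ t :=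
        measure_ge_le_exp_mul_mgf 0 ht (integrable_exp_mul_of_mem_Icc hS (ae_sum_mem_Icc hbdd))
    _ ≤ exp (n * (t * d + t ^ 2 * (b - a) ^ 2 / 8)) := by
        rw [mul_zero, exp_zero, one_mul]
        exact integral_exp_mul_sum_le_s15 ℱ hY hbdd hstep
    _ = exp (-(2 * n * d ^ 2 / (b - a) ^ 2)) := by
        congr 1; simp only [t]; field_simp; ring

end Martingale

lemma half_mul_div_sq_mul_le (d : ℝ) {c w : ℝ} {m n : ℕ} (hw : 0 < w) (hwc : w ≤ 2 * c)
    (hmn : m ≤ n) : 1 / 2 * (d / c) ^ 2 * m ≤ 2 * n * d ^ 2 / w ^ 2 :=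
  calc 1 / 2 * (d / c) ^ 2 * m ≤ 1 / 2 * (d / c) ^ 2 * n := by gcongr
    _ = 2 * n * d ^ 2 / (2 * c) ^ 2 := by field_simp
    _ ≤ 2 * n * d ^ 2 / w ^ 2 := by gcongr

section CycleWeights

variable {Ω : Type*} {m₀ : MeasurableSpace Ω} {μ : Measure Ω} {n : ℕ}
  (wV wE : Fin n → Ω → ℝ) (hV : ∀ k, Measurable (wV k))
  (hE : ∀ k, Measurable (wE k))

def weightFiltration : Filtration ℕ m₀ where
  seq k := ⨆ (j : Fin n) (_ : (j : ℕ) < k),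
    MeasurableSpace.comap (wV j) inferInstance ⊔ MeasurableSpace.comap (wE j) inferInstance
  mono' _ _ hkl := biSup_mono fun _ hj => hj.trans_le hkl
  le' _ := iSup₂_le fun j _ => sup_le (hV j).comap_le (hE j).comap_le

lemma measurable_weightFiltration (k : Fin n) (Δ : ℝ) :
    Measurable[weightFiltration wV wE hV hE (k + 1)] fun ω => wE k ω - wV k ω * Δ := by
  have hle : MeasurableSpace.comap (wV k) inferInstance ⊔ MeasurableSpace.comap (wE k) inferInstance
      ≤ weightFiltration wV wE hV hE (k + 1) :=
    le_iSup₂_of_le (f := fun (j : Fin n) (_ : (j : ℕ) < k + 1) =>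
      MeasurableSpace.comap (wV j) inferInstance ⊔ MeasurableSpace.comap (wE j) inferInstance)
      k (Nat.lt_succ_self k) le_rfl
  exact (Measurable.of_comap_le (le_sup_right.trans hle)).sub
    ((Measurable.of_comap_le (le_sup_left.trans hle)).mul_const Δ)

lemma weightFiltration_le_vertex (k : Fin n) :
    weightFiltration wV wE hV hE k ≤
      (⨆ (j : Fin n) (_ : j ≠ k), MeasurableSpace.comap (wV j) inferInstance) ⊔
        ⨆ j : Fin n, MeasurableSpace.comap (wE j) inferInstance :=
  iSup₂_le fun j hj =>
    sup_le_sup (le_iSup₂_of_le j (Fin.ne_of_lt hj) le_rfl) (le_iSup_of_le j le_rfl)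

lemma weightFiltration_le_edge (k : Fin n) :
    weightFiltration wV wE hV hE k ≤
      (⨆ j : Fin n, MeasurableSpace.comap (wV j) inferInstance) ⊔
        ⨆ (j : Fin n) (_ : j ≠ k), MeasurableSpace.comap (wE j) inferInstance :=
  iSup₂_le fun j hj =>
    sup_le_sup (le_iSup_of_le j le_rfl) (le_iSup₂_of_le j (Fin.ne_of_lt hj) le_rfl)

lemma condExp_weightFiltration_le [IsProbabilityMeasure μ] {Δ α β : ℝ} (k : Fin n)
    (hVint : Integrable (fun ω => wV k ω * Δ) μ) (hEint : Integrable (wE k) μ)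
    (hVcond : μ[fun ω => wV k ω * Δ |
        (⨆ (j : Fin n) (_ : j ≠ k), MeasurableSpace.comap (wV j) inferInstance) ⊔
        (⨆ j : Fin n, MeasurableSpace.comap (wE j) inferInstance)] =ᵐ[μ] fun _ => β)
    (hEcond : μ[wE k |
        (⨆ j : Fin n, MeasurableSpace.comap (wV j) inferInstance) ⊔
        (⨆ (j : Fin n) (_ : j ≠ k), MeasurableSpace.comap (wE j) inferInstance)]
        ≤ᵐ[μ] fun _ => α) :
    μ[fun ω => wE k ω - wV k ω * Δ|weightFiltration wV wE hV hE k] ≤ᵐ[μ] fun _ => α - β := by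
  set ℱ := weightFiltration wV wE hV hE
  have hmV := weightFiltration_le_vertex wV wE hV hE k
  have hmE := weightFiltration_le_edge wV wE hV hE k
  have hV' : μ[fun ω => wV k ω * Δ|ℱ k] =ᵐ[μ] fun _ => β := by
    refine (condExp_condExp_of_le hmV ?_).symm.trans ?_
    · exact sup_le (iSup₂_le fun j _ => (hV j).comap_le) (iSup_le fun j => (hE j).comap_le)
    · rw [← condExp_const (m := ℱ k) (μ := μ) (ℱ.le k) β]
      exact condExp_congr_ae hVcond
  have hE' : μ[wE k|ℱ k] ≤ᵐ[μ] fun _ => α := ae_condExp_le_const_of_le hmE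
    (sup_le (iSup_le fun j => (hV j).comap_le) (iSup₂_le fun j _ => (hE j).comap_le)) hEcond
  filter_upwards [condExp_sub hEint hVint (ℱ k), hV', hE'] with ω h₁ h₂ h₃
  change μ[wE k - fun ω => wV k ω * Δ|ℱ k] ω ≤ α - β
  rw [h₁, Pi.sub_apply, h₂]
  exact sub_le_sub_right h₃ β

end CycleWeights

theorem stmt_15_general {Ω : Type*} [MeasurableSpace Ω] (μ : Measure Ω) [IsProbabilityMeasure μ]
    (m : ℕ) (n : ℕ) (hnm : m ≤ n) (wV wE : Fin n → Ω → ℝ)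
    (hVmeas : ∀ k, Measurable (wV k)) (hEmeas : ∀ k, Measurable (wE k))
    (Δ A B α β : ℝ) (hβ : 0 < β) (hβB : β ≤ B) (hA : 0 < A) (hαβ : α < β)
    (hVbdd : ∀ k, ∀ᵐ ω ∂μ, 0 < wV k ω * Δ ∧ wV k ω * Δ ≤ B)
    (hVcond : ∀ k,
      μ[fun ω => wV k ω * Δ |
        (⨆ (j : Fin n) (_ : j ≠ k), MeasurableSpace.comap (wV j) inferInstance) ⊔
        (⨆ j : Fin n, MeasurableSpace.comap (wE j) inferInstance)]
        =ᵐ[μ] fun _ => β)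
    (hEbdd : ∀ k, ∀ᵐ ω ∂μ, wE k ω ∈ Set.Icc (-A) A)
    (hEcond : ∀ k, ∀ᵐ ω ∂μ,
      (μ[wE k |
        (⨆ j : Fin n, MeasurableSpace.comap (wV j) inferInstance) ⊔
        (⨆ (j : Fin n) (_ : j ≠ k), MeasurableSpace.comap (wE j) inferInstance)]) ω ≤ α) :
    1 - Real.exp (-(1 / 2) * ((α - β) / (A + B)) ^ 2 * m) ≤
      (μ {ω | (∑ k, -(wV k ω * Δ)) + ∑ k, wE k ω < 0}).toReal := by
  have hB : 0 < B := hβ.trans_le hβB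
  have hbdd : ∀ k, ∀ᵐ ω ∂μ, wE k ω - wV k ω * Δ ∈ Set.Icc (-A - B) A := fun k => by
    filter_upwards [hVbdd k, hEbdd k] with ω hV hE
    constructor <;> linarith [hE.1, hE.2]
  have hdrift k := condExp_weightFiltration_le wV wE hVmeas hEmeas k
    (Integrable.of_mem_Icc 0 B ((hVmeas k).mul_const Δ).aemeasurable
      ((hVbdd k).mono fun _ h => ⟨h.1.le, h.2⟩))
    (Integrable.of_mem_Icc (-A) A (hEmeas k).aemeasurable (hEbdd k)) (hVcond k) (hEcond k)
  have htail := measureReal_sum_nonneg_le (μ := μ) (weightFiltration wV wE hVmeas hEmeas)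
    (measurable_weightFiltration wV wE hVmeas hEmeas · Δ) (by linarith : -A - B < A)
    (by linarith : α - β ≤ 0) (by linarith : α - β ≤ A) hbdd hdrift
  have hset : {ω | (∑ k, -(wV k ω * Δ)) + ∑ k, wE k ω < 0}
      = {ω | 0 ≤ ∑ k, (wE k ω - wV k ω * Δ)}ᶜ := by
    ext ω
    simp only [Set.mem_ofPred_eq, Set.mem_compl_iff, not_le, Finset.sum_sub_distrib,
      Finset.sum_neg_distrib]
    constructor <;> intro h <;> linarith
  have hexp := half_mul_div_sq_mul_le (α - β) (by linarith : 0 < A - (-A - B))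
    (by linarith : A - (-A - B) ≤ 2 * (A + B)) hnm
  have hmeas : MeasurableSet {ω | 0 ≤ ∑ k, (wE k ω - wV k ω * Δ)} :=
    measurableSet_le measurable_const
      (Finset.measurable_fun_sum _ fun k _ => (hEmeas k).sub ((hVmeas k).mul_const Δ))
  rw [hset, ← measureReal_def, probReal_compl_eq_one_sub hmeas]
  exact sub_le_sub_left (htail.trans (exp_le_exp.2 (by linarith))) 1

/-- If the graph is nicely connected with parameter `m = ⌊Φ(|P_S|)⌋` (so an
Algorithm-1 cycle `v 0, ..., v (n-1)` has all vertices in `P_S` and length `n ≥ m`) and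
nicely Δ-weighted (vertex weights `0 < wV k Δ ≤ B` with conditional mean `β`, edge weights
in `[−A, A]` with conditional mean `≤ α < β`), then the cycle satisfies
`Γ(W) = Σ (−wV k Δ) + Σ wE k < 0` (is Δ-contractive) with probability at least
`1 − exp(−(1/2)((α−β)/(A+B))² m)`. -/
theorem stmt_15 {Ω P : Type*} [MeasurableSpace Ω] (μ : Measure Ω) [IsProbabilityMeasure μ]
    [Fintype P] (E : P → P → Prop) (PS : Set P)
    (Φ : ℕ → ℝ) (hΦ : Monotone Φ) (m : ℕ) (hm : (m : ℤ) = ⌊Φ PS.ncard⌋) (hm1 : 1 ≤ m)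
    (hconn : ∀ j : P, m ≤ {u ∈ PS | E j u}.ncard)
    (n : ℕ) [NeZero n] (hn : 0 < n) (hnm : m ≤ n)
    (v : Fin n → P) (hvPS : ∀ k, v k ∈ PS)
    (hvinj : Function.Injective v)
    (hvedge : ∀ k : Fin n, E (v k) (v (k + 1)))
    (wV wE : Fin n → Ω → ℝ)
    (hVmeas : ∀ k, Measurable (wV k)) (hEmeas : ∀ k, Measurable (wE k))
    (Δ A B α β : ℝ) (hΔ : 0 < Δ) (hβ : 0 < β) (hβB : β ≤ B) (hA : 0 < A) (hαβ : α < β)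
    (hVbdd : ∀ k, ∀ᵐ ω ∂μ, 0 < wV k ω * Δ ∧ wV k ω * Δ ≤ B)
    (hVcond : ∀ k,
      μ[fun ω => wV k ω * Δ |
        (⨆ (j : Fin n) (_ : j ≠ k), MeasurableSpace.comap (wV j) inferInstance) ⊔
        (⨆ j : Fin n, MeasurableSpace.comap (wE j) inferInstance)]
        =ᵐ[μ] fun _ => β)
    (hEbdd : ∀ k, ∀ᵐ ω ∂μ, wE k ω ∈ Set.Icc (-A) A)
    (hEcond : ∀ k, ∀ᵐ ω ∂μ,
      (μ[wE k |
        (⨆ j : Fin n, MeasurableSpace.comap (wV j) inferInstance) ⊔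
        (⨆ (j : Fin n) (_ : j ≠ k), MeasurableSpace.comap (wE j) inferInstance)]) ω ≤ α) :
    1 - Real.exp (-(1 / 2) * ((α - β) / (A + B)) ^ 2 * m) ≤
      (μ {ω | (∑ k, -(wV k ω * Δ)) + ∑ k, wE k ω < 0}).toReal :=
  stmt_15_general μ m n hnm wV wE hVmeas hEmeas Δ A B α β hβ hβB hA hαβ hVbdd hVcond hEbdd hEcond
end

section
/- Iterating the mixed Lyapunov inequalities over one period of the periodic switching signal (dwell time Δ on each of the n cycle vertices, with switch multipliers μ), the active Lyapunov function with bounded input v and output y satisfies V_{v_0}(x(nΔ)) ≤ exp(Γ(W)) V_{v_0}(x(0)) + c (γ_1(‖v‖_{nΔ}) + γ_2(‖y‖_{nΔ})) for some constant c > 0 depending only on the λ's, μ's, n, and Δ. -/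
/-- Iterating the mixed IOSS-Lyapunov inequalities over one period of the
periodic switching signal (dwell time `Δ` on each of the `n` cycle vertices, switch
multipliers `μ`), the active Lyapunov function with bounded input `v` and output `y`
satisfies `V_{v 0} (x (nΔ)) ≤ exp (Γ(W)) V_{v 0} (x 0) + c (γ₁ ‖v‖_{nΔ} + γ₂ ‖y‖_{nΔ})`
for some constant `c > 0` depending only on the `λ`'s, `μ`'s, `n` and `Δ`. -/
theorem stmt_17 {E U Y P : Type*} [NormedAddCommGroup E] [NormedAddCommGroup U]
    [NormedAddCommGroup Y]
    (n Δ : ℕ) (hn : 0 < n) (hΔ : 0 < Δ)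
    (vert : ℕ → P) (hvper : ∀ k, vert (k + n) = vert k)
    (V : P → E → ℝ) (f : P → E → U → E) (h : P → E → Y)
    (lam : P → ℝ) (muw : P → P → ℝ) (γ1 γ2 : ℝ → ℝ)
    (hVnn : ∀ (i : P) (ξ : E), 0 ≤ V i ξ)
    (hlam : ∀ k, 0 < lam (vert k))
    (hmu : ∀ k, 1 ≤ muw (vert k) (vert (k + 1)))
    (hγ1K : StrictMono γ1 ∧ Continuous γ1 ∧ γ1 0 = 0)
    (hγ2K : StrictMono γ2 ∧ Continuous γ2 ∧ γ2 0 = 0)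
    (hstep : ∀ (k : ℕ) (ξ : E) (η : U),
      V (vert k) (f (vert k) ξ η) ≤
        lam (vert k) * V (vert k) ξ + γ1 ‖η‖ + γ2 ‖h (vert k) ξ‖)
    (hswitch : ∀ (k : ℕ) (ξ : E),
      V (vert (k + 1)) ξ ≤ muw (vert k) (vert (k + 1)) * V (vert k) ξ) :
    ∃ c : ℝ, 0 < c ∧
      ∀ (x : ℕ → E) (vin : ℕ → U),
        (∀ t < n * Δ, x (t + 1) = f (vert (t / Δ)) (x t) (vin t)) →
        V (vert 0) (x (n * Δ)) ≤
          Real.exp ((∑ k ∈ Finset.range n, Real.log (lam (vert k)) * Δ) +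
            ∑ k ∈ Finset.range n, Real.log (muw (vert k) (vert (k + 1)))) *
            V (vert 0) (x 0) +
          c * (γ1 (⨆ s : Fin (n * Δ + 1), ‖vin s‖) +
            γ2 (⨆ s : Fin (n * Δ + 1), ‖h (vert (↑s / Δ)) (x s)‖)) := by
  obtain ⟨hγ1m, -, hγ10⟩ := hγ1K
  obtain ⟨hγ2m, -, hγ20⟩ := hγ2K
  set cseq : ℕ → ℝ := fun m => Nat.rec (0:ℝ)
    (fun k ck => muw (vert k) (vert (k+1)) *
      ((lam (vert k))^Δ * ck + ∑ j ∈ Finset.range Δ, (lam (vert k))^j)) m with hcseq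
  have hcnn : ∀ m, 0 ≤ cseq m := by
    intro m
    induction m with
    | zero => simp [hcseq]
    | succ k ih =>
      have hS : 0 ≤ ∑ j ∈ Finset.range Δ, (lam (vert k))^j :=
        Finset.sum_nonneg fun j _ => pow_nonneg (hlam k).le j
      have : cseq (k+1) = muw (vert k) (vert (k+1)) *
          ((lam (vert k))^Δ * cseq k + ∑ j ∈ Finset.range Δ, (lam (vert k))^j) := rfl
      rw [this]
      exact mul_nonneg (le_trans zero_le_one (hmu k))
        (add_nonneg (mul_nonneg (pow_nonneg (hlam k).le _) ih) hS)
  refine ⟨cseq n + 1, by linarith [hcnn n], ?_⟩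
  intro x vin hx
  set Sv : ℝ := ⨆ s : Fin (n * Δ + 1), ‖vin s‖ with hSv
  set Sy : ℝ := ⨆ s : Fin (n * Δ + 1), ‖h (vert (↑s / Δ)) (x s)‖ with hSy
  have hbv : ∀ s : Fin (n * Δ + 1), ‖vin s‖ ≤ Sv := fun s =>
    le_ciSup (f := fun s : Fin (n * Δ + 1) => ‖vin s‖)
      (Set.Finite.bddAbove (Set.finite_range _)) s
  have hby : ∀ s : Fin (n * Δ + 1), ‖h (vert (↑s / Δ)) (x s)‖ ≤ Sy := fun s =>
    le_ciSup (f := fun s : Fin (n * Δ + 1) => ‖h (vert (↑s / Δ)) (x s)‖)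
      (Set.Finite.bddAbove (Set.finite_range _)) s
  set G : ℝ := γ1 Sv + γ2 Sy with hG
  have hG0 : 0 ≤ G := by
    have h1 : (0:ℝ) ≤ Sv := le_trans (norm_nonneg _) (hbv ⟨0, Nat.succ_pos _⟩)
    have h2 : (0:ℝ) ≤ Sy := le_trans (norm_nonneg _) (hby ⟨0, Nat.succ_pos _⟩)
    have := hγ1m.monotone h1
    have := hγ2m.monotone h2
    rw [hγ10] at *; rw [hγ20] at *
    have : γ1 0 ≤ γ1 Sv := hγ1m.monotone h1
    have : γ2 0 ≤ γ2 Sy := hγ2m.monotone h2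
    rw [hG]; rw [hγ10] at *; rw [hγ20] at *; linarith
  -- one-step bound
  have hstep' : ∀ t < n * Δ, V (vert (t / Δ)) (x (t + 1)) ≤
      lam (vert (t / Δ)) * V (vert (t / Δ)) (x t) + G := by
    intro t ht
    have ht' : t < n * Δ + 1 := Nat.lt_succ_of_lt ht
    have h1 : γ1 ‖vin t‖ ≤ γ1 Sv := hγ1m.monotone (hbv ⟨t, ht'⟩)
    have h2 : γ2 ‖h (vert (t / Δ)) (x t)‖ ≤ γ2 Sy := hγ2m.monotone (hby ⟨t, ht'⟩)
    have := hstep (t / Δ) (x t) (vin t)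
    rw [← hx t ht] at this
    rw [hG]; linarith
  -- block claim
  have hblock : ∀ k ≤ n, V (vert k) (x (k * Δ)) ≤
      (∏ j ∈ Finset.range k, (lam (vert j))^Δ * muw (vert j) (vert (j+1))) *
        V (vert 0) (x 0) + cseq k * G := by
    intro k hk
    induction k with
    | zero => simp [hcseq]
    | succ k ih =>
      have hkn : k < n := Nat.lt_of_succ_le hk
      have ih' := ih (Nat.le_of_lt hkn)
      -- within-block
      have hin : ∀ d ≤ Δ, V (vert k) (x (k * Δ + d)) ≤
          (lam (vert k))^d * V (vert k) (x (k * Δ)) +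
            (∑ j ∈ Finset.range d, (lam (vert k))^j) * G := by
        intro d hd
        induction d with
        | zero => simp
        | succ d ihd =>
          have hd' : d ≤ Δ := Nat.le_of_succ_le hd
          have ihd' := ihd hd'
          have htlt : k * Δ + d < n * Δ := by
            calc k * Δ + d < k * Δ + Δ := by omega
            _ = (k + 1) * Δ := by ring
            _ ≤ n * Δ := Nat.mul_le_mul_right Δ hk
          have hdiv : (k * Δ + d) / Δ = k := by
            have hdΔ : d < Δ := Nat.lt_of_lt_of_le (Nat.lt_of_succ_le hd) le_rfl
            rw [Nat.mul_comm k Δ, Nat.mul_add_div hΔ, Nat.div_eq_of_lt hdΔ]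
            omega
          have hst := hstep' (k * Δ + d) htlt
          rw [hdiv] at hst
          have hlk := hlam k
          have : V (vert k) (x (k * Δ + (d + 1))) ≤
              lam (vert k) * V (vert k) (x (k * Δ + d)) + G := by
            have : k * Δ + (d + 1) = (k * Δ + d) + 1 := by ring
            rw [this]; exact hst
          calc V (vert k) (x (k * Δ + (d + 1)))
              ≤ lam (vert k) * V (vert k) (x (k * Δ + d)) + G := this
            _ ≤ lam (vert k) * ((lam (vert k))^d * V (vert k) (x (k * Δ)) +
                  (∑ j ∈ Finset.range d, (lam (vert k))^j) * G) + G := by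
                have := mul_le_mul_of_nonneg_left ihd' hlk.le
                linarith
            _ = (lam (vert k))^(d+1) * V (vert k) (x (k * Δ)) +
                  (∑ j ∈ Finset.range (d+1), (lam (vert k))^j) * G := by
                rw [geom_sum_succ]; ring
      have hend := hin Δ le_rfl
      have hsw := hswitch k (x ((k + 1) * Δ))
      have hrw : (k + 1) * Δ = k * Δ + Δ := by ring
      rw [hrw] at hsw
      have hmuk := hmu k
      have hmu0 : (0:ℝ) ≤ muw (vert k) (vert (k+1)) := le_trans zero_le_one hmuk
      have hlΔ : (0:ℝ) ≤ (lam (vert k))^Δ := pow_nonneg (hlam k).le Δ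
      have hcs : cseq (k+1) = muw (vert k) (vert (k+1)) *
          ((lam (vert k))^Δ * cseq k + ∑ j ∈ Finset.range Δ, (lam (vert k))^j) := rfl
      calc V (vert (k+1)) (x ((k+1) * Δ))
          ≤ muw (vert k) (vert (k+1)) * V (vert k) (x (k * Δ + Δ)) := by
            rw [hrw]; exact hsw
        _ ≤ muw (vert k) (vert (k+1)) * ((lam (vert k))^Δ * V (vert k) (x (k * Δ)) +
              (∑ j ∈ Finset.range Δ, (lam (vert k))^j) * G) :=
            mul_le_mul_of_nonneg_left hend hmu0
        _ ≤ muw (vert k) (vert (k+1)) * ((lam (vert k))^Δ *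
              ((∏ j ∈ Finset.range k, (lam (vert j))^Δ * muw (vert j) (vert (j+1))) *
                V (vert 0) (x 0) + cseq k * G) +
              (∑ j ∈ Finset.range Δ, (lam (vert k))^j) * G) := by
            apply mul_le_mul_of_nonneg_left _ hmu0
            have := mul_le_mul_of_nonneg_left ih' hlΔ
            linarith
        _ = (∏ j ∈ Finset.range (k+1), (lam (vert j))^Δ * muw (vert j) (vert (j+1))) *
              V (vert 0) (x 0) + cseq (k+1) * G := by
            rw [Finset.prod_range_succ, hcs]; ring
  have hfin := hblock n le_rfl
  have hv0 : vert n = vert 0 := by have := hvper 0; simpa using this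
  rw [hv0] at hfin
  have hexp : Real.exp ((∑ k ∈ Finset.range n, Real.log (lam (vert k)) * Δ) +
      ∑ k ∈ Finset.range n, Real.log (muw (vert k) (vert (k + 1)))) =
      ∏ j ∈ Finset.range n, (lam (vert j))^Δ * muw (vert j) (vert (j+1)) := by
    rw [Real.exp_add, Real.exp_sum, Real.exp_sum, ← Finset.prod_mul_distrib]
    apply Finset.prod_congr rfl
    intro j _
    rw [mul_comm (Real.log (lam (vert j))) (Δ:ℝ), Real.exp_nat_mul,
      Real.exp_log (hlam j), Real.exp_log (lt_of_lt_of_le zero_lt_one (hmu j))]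
  rw [hexp]
  have : cseq n * G ≤ (cseq n + 1) * G := by nlinarith
  linarith
end
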